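/- arXiv:2312.15091 — 4 statements merged into one kernel-verified Lean document; each statement's English description precedes it below -/
import Mathlib

section
/- Under Assumptions 3 and 4, for each x > 0, almost surely lim_{n→∞} (Σ_{k=ν(n,i)}^{ν(Ñ(n,x),i)} α_k)/(Σ_{k=ν(n,j)}^{ν(Ñ(n,x),j)} α_k) = 1 for all i, j ∈ I. -/
/-!
Fix a level `q > 0` and follow the successive first-passage times `e₀ < e₁ < ⋯` of the sums of
`α` through `q`. Summed along this orbit, the accumulated stepsizes of component `i` telescope to
`∑_{k ≤ ν(e_T, i)} α_k`, which is asymptotically `∑_{k ≤ e_T} α_k` because every local clock runs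
at positive speed (Assumptions 3(iii) and 4(i)). So the orbit sums of any two components have ratio
tending to `1`, and by Stolz–Cesàro the limit of the termwise ratios granted by Assumption 4(ii)
must be `1` as well.

The random time `Ñ(n, z)` is not of the form `N(n, q)`, but the `α`-mass it collects eventually lies
in a fixed interval `[r, 2z]` with `r > 0`. Squeezing `Ñ(n, z)` between `N(n, q_t)` and
`N(n, q_{t+1})` for a fine rational grid of levels transfers the limit `1` from the grid levels to
`Ñ(n, z)`: the accumulated stepsizes are bounded below, and by Assumption 3(ii) they change by
`O(q_{t+1} - q_t)` between neighbouring levels.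
-/

open MeasureTheory Filter

open Finset Topology Asymptotics

namespace AsyncStepsize

theorem sum_Ioc_eq_sub_sum_range {M : Type*} [AddCommGroup M] (f : ℕ → M) {a b : ℕ}
    (h : a ≤ b) : ∑ k ∈ Ioc a b, f k = ∑ k ∈ range (b + 1), f k - ∑ k ∈ range (a + 1), f k := by
  rw [← Ico_add_one_add_one_eq_Ioc, sum_Ico_eq_sub _ (by omega)]

theorem sum_Icc_add_eq_add_sum_Icc_succ {M : Type*} [AddCommMonoid M] (f : ℕ → M) {a b : ℕ}
    (h : a ≤ b) : ∑ k ∈ Icc a b, f k + f (b + 1) = f a + ∑ k ∈ Icc a b, f (k + 1) := by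
  induction b, h using Nat.le_induction with
  | base => simp
  | succ b hab ih => rw [sum_Icc_succ_top (by omega), ih, sum_Icc_succ_top (by omega), add_assoc]

theorem sum_Icc_add_le_add_sum_Icc {a g : ℕ → ℝ} {n m : ℕ} (h : n ≤ m)
    (hg : ∀ k ∈ Icc n m, a (k + 1) ≤ g k) :
    ∑ k ∈ Icc n m, a k + a (m + 1) ≤ a n + ∑ k ∈ Icc n m, g k := by
  rw [sum_Icc_add_eq_add_sum_Icc_succ a h]
  exact add_le_add le_rfl (sum_le_sum hg)

theorem tendsto_sum_range_div_sum_range {a b : ℕ → ℝ} {ℓ : ℝ} (hb : ∀ t, 0 < b t)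
    (hsum : Tendsto (fun T => ∑ t ∈ range T, b t) atTop atTop)
    (h : Tendsto (fun t => a t / b t) atTop (𝓝 ℓ)) :
    Tendsto (fun T => (∑ t ∈ range T, a t) / ∑ t ∈ range T, b t) atTop (𝓝 ℓ) := by
  have hterm : (fun t => a t - ℓ * b t) =o[atTop] b := by
    rw [isLittleO_iff_tendsto' (.of_forall fun t ht => absurd ht (hb t).ne')]
    refine (tendsto_sub_nhds_zero_iff.2 h).congr fun t => ?_
    field_simp [(hb t).ne']
  have hsums := (hterm.sum_range (fun t => (hb t).le) hsum).tendsto_div_nhds_zero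
  refine tendsto_sub_nhds_zero_iff.1 (hsums.congr' ?_)
  filter_upwards [hsum.eventually_gt_atTop 0] with T hT
  rw [sum_sub_distrib, ← mul_sum, sub_div, mul_div_cancel_right₀ _ hT.ne']

theorem tendsto_div_nhds_one_of_eventually_le_mul {β : Type*} {l : Filter β} {a b : β → ℝ}
    (ha : ∀ᶠ n in l, 0 < a n) (hb : ∀ᶠ n in l, 0 < b n)
    (hab : ∀ ε > 0, ∀ᶠ n in l, a n ≤ (1 + ε) * b n)
    (hba : ∀ ε > 0, ∀ᶠ n in l, b n ≤ (1 + ε) * a n) :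
    Tendsto (fun n => a n / b n) l (𝓝 1) := by
  refine tendsto_order.2 ⟨fun u hu => ?_, fun u hu => ?_⟩
  · filter_upwards [ha, hb, hba (1 - u) (by linarith)] with n ha hb hba
    rw [lt_div_iff₀ hb]
    rcases le_or_gt u 0 with hu0 | hu0
    · nlinarith
    · nlinarith [mul_pos (pow_pos (sub_pos.2 hu) 2) ha]
  · filter_upwards [hb, hab ((u - 1) / 2) (by linarith)] with n hb hab
    rw [div_lt_iff₀ hb]
    nlinarith

theorem eventually_floor_mul_le_of_lt_liminf {u : ℕ → ℕ} {Δ Δ' : ℝ} (hΔ' : Δ' < Δ)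
    (hΔ : Δ ≤ liminf (fun n => (u n : ℝ) / n) atTop) : ∀ᶠ n : ℕ in atTop, ⌊Δ' * n⌋₊ ≤ u n := by
  have hbdd : IsBoundedUnder (· ≥ ·) atTop fun n => (u n : ℝ) / n :=
    isBoundedUnder_of_eventually_ge (.of_forall fun n => by positivity)
  filter_upwards [eventually_lt_of_lt_liminf (hΔ'.trans_le hΔ) hbdd, eventually_gt_atTop 0]
    with n hn hn0
  rw [lt_div_iff₀ (by exact_mod_cast hn0)] at hn
  exact Nat.floor_le_of_le hn.le

theorem exists_lt_add_mul_le_lt {r σ R δ : ℝ} {K : ℕ} (hδ : 0 < δ) (hrσ : r ≤ σ) (hσR : σ ≤ R)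
    (hK : (R - r) / δ < K) : ∃ t < K, r + t * δ ≤ σ ∧ σ < r + (t + 1) * δ := by
  have hy : 0 ≤ (σ - r) / δ := div_nonneg (by linarith) hδ.le
  refine ⟨⌊(σ - r) / δ⌋₊, (Nat.floor_lt hy).2 ((div_le_div_of_nonneg_right (by linarith)
    hδ.le).trans_lt hK), ?_, ?_⟩
  · have := Nat.floor_le hy
    rw [le_div_iff₀ hδ] at this
    linarith
  · have := Nat.lt_floor_add_one ((σ - r) / δ)
    rw [div_lt_iff₀ hδ] at this
    linarith

/-- `N(n, x)` is `firstPassage α n x` and `Ñ(n, x)` is `firstPassage (updateMass α Y) n x`.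
The junk value `0` occurs only when the sums never reach `x`. -/
noncomputable def firstPassage (a : ℕ → ℝ) (n : ℕ) (x : ℝ) : ℕ :=
  sInf {m | n < m ∧ x ≤ ∑ k ∈ Icc n m, a k}

section FirstPassage

variable {a : ℕ → ℝ} {n m : ℕ} {x : ℝ}

theorem firstPassage_le (hm : n < m) (hx : x ≤ ∑ k ∈ Icc n m, a k) : firstPassage a n x ≤ m :=
  Nat.sInf_le ⟨hm, hx⟩

theorem lt_firstPassage_and_le_sum (hm : n < m) (hx : x ≤ ∑ k ∈ Icc n m, a k) :
    n < firstPassage a n x ∧ x ≤ ∑ k ∈ Icc n (firstPassage a n x), a k :=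
  Nat.sInf_mem (s := {m | n < m ∧ x ≤ ∑ k ∈ Icc n m, a k}) ⟨m, hm, hx⟩

theorem firstPassage_mono (hm : n < m) {y : ℝ} (hy : y ≤ ∑ k ∈ Icc n m, a k) (hxy : x ≤ y) :
    firstPassage a n x ≤ firstPassage a n y := by
  obtain ⟨hlt, hle⟩ := lt_firstPassage_and_le_sum hm hy
  exact firstPassage_le hlt (hxy.trans hle)

theorem sum_Icc_pred_firstPassage_lt (hm : n < m) (hx : x ≤ ∑ k ∈ Icc n m, a k)
    (han : a n < x) : ∑ k ∈ Icc n (firstPassage a n x - 1), a k < x := by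
  have hlt := (lt_firstPassage_and_le_sum hm hx).1
  rcases (Nat.le_sub_one_of_lt hlt).eq_or_lt with heq | hgt
  · rwa [← heq, Icc_self, sum_singleton]
  · by_contra! hle
    have := firstPassage_le hgt hle
    omega

theorem sum_Icc_firstPassage_lt (hm : n < m) (hx : x ≤ ∑ k ∈ Icc n m, a k) (han : a n < x) :
    ∑ k ∈ Icc n (firstPassage a n x), a k < x + a (firstPassage a n x) := by
  have hlt := (lt_firstPassage_and_le_sum hm hx).1
  obtain ⟨p, hp⟩ : ∃ p, firstPassage a n x = p + 1 :=
    ⟨_, (Nat.succ_pred_eq_of_pos (by omega)).symm⟩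
  have hpred := sum_Icc_pred_firstPassage_lt hm hx han
  rw [hp, Nat.add_sub_cancel] at hpred
  rw [hp, sum_Icc_succ_top (by omega)]
  linarith

theorem exists_lt_le_sum_Icc (ha : ∀ k, 0 ≤ a k) (hdiv : ¬ Summable a) (n : ℕ) (x : ℝ) :
    ∃ m, n < m ∧ x ≤ ∑ k ∈ Icc n m, a k := by
  have htop := (not_summable_iff_tendsto_nat_atTop_of_nonneg ha).1 hdiv
  obtain ⟨m, hm, hnm⟩ :=
    ((htop.eventually_ge_atTop (x + ∑ k ∈ range n, a k)).and
      (eventually_gt_atTop (n + 1))).exists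
  refine ⟨m, by omega, ?_⟩
  have hIco : ∑ k ∈ Ico n m, a k ≤ ∑ k ∈ Icc n m, a k :=
    sum_le_sum_of_subset_of_nonneg Ico_subset_Icc_self fun k _ _ => ha k
  rw [sum_Ico_eq_sub _ (by omega)] at hIco
  linarith

theorem lt_firstPassage (ha : ∀ k, 0 ≤ a k) (hdiv : ¬ Summable a) (n : ℕ) (x : ℝ) :
    n < firstPassage a n x :=
  let ⟨_, hm, hx⟩ := exists_lt_le_sum_Icc ha hdiv n x
  (lt_firstPassage_and_le_sum hm hx).1

theorem lt_firstPassage_of_sum_lt (ha : ∀ k, 0 ≤ a k) (hdiv : ¬ Summable a)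
    (hm : ∑ k ∈ Icc n m, a k < x) : m < firstPassage a n x := by
  by_contra! hle
  obtain ⟨m', hm', hx⟩ := exists_lt_le_sum_Icc ha hdiv n x
  have := (lt_firstPassage_and_le_sum hm' hx).2.trans
    (sum_le_sum_of_subset_of_nonneg (Icc_subset_Icc_right hle) fun k _ _ => ha k)
  linarith

theorem eventually_sum_Icc_firstPassage_mem {a g : ℕ → ℝ} {C z : ℝ} (ha : ∀ k, 0 < a k)
    (ha0 : Tendsto a atTop (𝓝 0)) (hdiv : ¬ Summable a) (hC : 0 < C) (hz : 0 < z)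
    (hg_low : ∀ᶠ k in atTop, a (k + 1) ≤ g k) (hg_up : ∀ᶠ k in atTop, g k ≤ C * a k) :
    ∀ᶠ n in atTop, n < firstPassage g n z ∧ z / C ≤ ∑ k ∈ Icc n (firstPassage g n z), a k ∧
      ∑ k ∈ Icc n (firstPassage g n z), a k ≤ 2 * z := by
  obtain ⟨K, hK⟩ := eventually_atTop.1 (hg_low.and hg_up)
  filter_upwards [eventually_ge_atTop K, ha0.eventually (gt_mem_nhds (div_pos hz hC)),
    ha0.eventually (ge_mem_nhds hz)] with n hn han han'
  have hshift : ∀ {m}, n ≤ m → ∑ k ∈ Icc n m, a k + a (m + 1) ≤ a n + ∑ k ∈ Icc n m, g k :=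
    fun hm => sum_Icc_add_le_add_sum_Icc hm fun k hk => (hK k (hn.trans (mem_Icc.1 hk).1)).1
  obtain ⟨m, hm, hzm⟩ := exists_lt_le_sum_Icc (fun k => (ha k).le) hdiv n (z + a n)
  have hwit : z ≤ ∑ k ∈ Icc n m, g k := by linarith [hshift hm.le, ha (m + 1)]
  obtain ⟨hlt, hle⟩ := lt_firstPassage_and_le_sum hm hwit
  set p := firstPassage g n z
  refine ⟨hlt, ?_, ?_⟩
  · rw [div_le_iff₀ hC, mul_comm, mul_sum]
    exact hle.trans (sum_le_sum fun k hk => (hK k (hn.trans (mem_Icc.1 hk).1)).2)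
  · have hgn : g n < z := by
      have := (hK n hn).2
      rw [lt_div_iff₀ hC] at han
      linarith
    have hpred := sum_Icc_pred_firstPassage_lt hm hwit hgn
    have hp : p - 1 + 1 = p := Nat.sub_add_cancel (by omega)
    have := hshift (m := p - 1) (by omega)
    rw [hp] at this
    rw [← hp, sum_Icc_succ_top (by omega), hp]
    linarith

end FirstPassage

section Clock

variable {ι : Type*} [DecidableEq ι]

/-- The local clock `ν(n, i)`. -/
def visits (Y : ℕ → Finset ι) (i : ι) (n : ℕ) : ℕ :=
  ∑ k ∈ range (n + 1), if i ∈ Y k then 1 else 0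

def clockSum (α : ℕ → ℝ) (Y : ℕ → Finset ι) (i : ι) (n m : ℕ) : ℝ :=
  ∑ k ∈ Icc (visits Y i n) (visits Y i m), α k

def updateMass (α : ℕ → ℝ) (Y : ℕ → Finset ι) (k : ℕ) : ℝ :=
  ∑ i ∈ Y k, α (visits Y i k)

variable {Y : ℕ → Finset ι} {i : ι} {α : ℕ → ℝ} {n m : ℕ}

theorem visits_succ (n : ℕ) :
    visits Y i (n + 1) = visits Y i n + if i ∈ Y (n + 1) then 1 else 0 :=
  sum_range_succ _ _

theorem visits_mono : Monotone (visits Y i) :=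
  monotone_nat_of_le_succ fun n => by rw [visits_succ]; split <;> omega

theorem visits_le (n : ℕ) : visits Y i n ≤ n + 1 :=
  calc visits Y i n ≤ ∑ _k ∈ range (n + 1), 1 := sum_le_sum fun k _ => by split <;> omega
    _ = n + 1 := by simp

theorem sum_Ioc_visits {M : Type*} [AddCommMonoid M] (f : ℕ → M) (h : n ≤ m) :
    ∑ k ∈ Ioc n m, (if i ∈ Y k then f (visits Y i k) else 0) =
      ∑ k ∈ Ioc (visits Y i n) (visits Y i m), f k := by
  induction m, h using Nat.le_induction with
  | base => simp
  | succ m hnm ih =>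
    rw [sum_Ioc_succ_top hnm, ih, visits_succ]
    split
    · rw [sum_Ioc_succ_top (visits_mono hnm)]
    · simp

theorem clockSum_eq_add_sum_Ioc (h : n ≤ m) :
    clockSum α Y i n m = α (visits Y i n) + ∑ k ∈ Ioc (visits Y i n) (visits Y i m), α k :=
  (add_sum_Ioc_eq_sum_Icc (visits_mono h)).symm

theorem clockSum_eq_add_sum_updates (h : n ≤ m) :
    clockSum α Y i n m =
      α (visits Y i n) + ∑ k ∈ Ioc n m, if i ∈ Y k then α (visits Y i k) else 0 := by
  rw [clockSum_eq_add_sum_Ioc h, sum_Ioc_visits _ h]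

theorem clockSum_eq_add_sum_updates_of_le {m' : ℕ} (hnm : n ≤ m) (hmm' : m ≤ m') :
    clockSum α Y i n m' =
      clockSum α Y i n m + ∑ k ∈ Ioc m m', if i ∈ Y k then α (visits Y i k) else 0 := by
  rw [clockSum_eq_add_sum_updates (hnm.trans hmm'), clockSum_eq_add_sum_updates hnm,
    ← sum_Ioc_consecutive _ hnm hmm', add_assoc]

theorem clockSum_pos (hα : ∀ k, 0 < α k) (h : n ≤ m) : 0 < clockSum α Y i n m :=
  sum_pos (fun k _ => hα k) (nonempty_Icc.2 (visits_mono h))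

theorem clockSum_mono (hα : ∀ k, 0 ≤ α k) : Monotone (clockSum α Y i n) := fun _ _ h =>
  sum_le_sum_of_subset_of_nonneg (Icc_subset_Icc_right (visits_mono h)) fun k _ _ => hα k

theorem sum_updateMass_le_sum_clockSum [Fintype ι] (hα : ∀ k, 0 ≤ α k) (h : n ≤ m) :
    ∑ k ∈ Icc n m, updateMass α Y k ≤ ∑ i, clockSum α Y i n m := by
  have hupdates : ∀ k, updateMass α Y k = ∑ i, if i ∈ Y k then α (visits Y i k) else 0 := by
    intro k
    rw [sum_ite_mem, univ_inter, updateMass]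
  have hfirst : updateMass α Y n ≤ ∑ i, α (visits Y i n) :=
    sum_le_sum_of_subset_of_nonneg (subset_univ _) fun i _ _ => hα _
  simp only [clockSum_eq_add_sum_updates h, sum_add_distrib, ← add_sum_Ioc_eq_sum_Icc h]
  rw [sum_comm]
  simp only [← hupdates]
  linarith

theorem le_updateMass {k : ℕ} {x : ℝ} (hY : (Y k).Nonempty) (hα : ∀ k, 0 ≤ α k)
    (h : ∀ i, x ≤ α (visits Y i k)) : x ≤ updateMass α Y k :=
  let ⟨i, hi⟩ := hY
  (h i).trans (single_le_sum (f := fun i => α (visits Y i k)) (fun _ _ => hα _) hi)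

theorem updateMass_le [Fintype ι] {k : ℕ} {x : ℝ} (hα : ∀ k, 0 ≤ α k)
    (h : ∀ i, α (visits Y i k) ≤ x) : updateMass α Y k ≤ Fintype.card ι * x :=
  calc updateMass α Y k ≤ ∑ i, α (visits Y i k) :=
        sum_le_sum_of_subset_of_nonneg (subset_univ _) fun i _ _ => hα _
    _ ≤ ∑ _i : ι, x := sum_le_sum fun i _ => h i
    _ = Fintype.card ι * x := by rw [sum_const, card_univ, nsmul_eq_mul]

theorem sum_range_clockSum {e : ℕ → ℕ} (he : Monotone e) (T : ℕ) :
    ∑ t ∈ range T, clockSum α Y i (e t) (e (t + 1)) =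
      ∑ t ∈ range T, α (visits Y i (e t)) +
        ∑ k ∈ Ioc (visits Y i (e 0)) (visits Y i (e T)), α k := by
  induction T with
  | zero => simp
  | succ T ih =>
    rw [sum_range_succ, ih, clockSum_eq_add_sum_Ioc (he T.le_succ), sum_range_succ,
      ← sum_Ioc_consecutive _ (visits_mono (he T.zero_le)) (visits_mono (he T.le_succ))]
    ring

end Clock

section Stepsize

variable {α : ℕ → ℝ}

theorem tendsto_sum_range_succ_atTop (hα : ∀ k, 0 ≤ α k) (hdiv : ¬ Summable α) :
    Tendsto (fun n => ∑ k ∈ range (n + 1), α k) atTop atTop :=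
  ((not_summable_iff_tendsto_nat_atTop_of_nonneg hα).1 hdiv).comp (tendsto_add_atTop_nat 1)

theorem tendsto_sum_range_succ_succ_div (hα : ∀ k, 0 < α k) (hα0 : Tendsto α atTop (𝓝 0))
    (hdiv : ¬ Summable α) :
    Tendsto (fun n => (∑ k ∈ range (n + 1 + 1), α k) / ∑ k ∈ range (n + 1), α k) atTop (𝓝 1) := by
  have hsmall := (hα0.comp (tendsto_add_atTop_nat 1)).div_atTop
    (tendsto_sum_range_succ_atTop (fun k => (hα k).le) hdiv)
  have hlim : Tendsto (fun n => 1 + (α ∘ fun n => n + 1) n / ∑ k ∈ range (n + 1), α k) atTop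
      (𝓝 (1 + 0)) := tendsto_const_nhds.add hsmall
  rw [add_zero] at hlim
  refine hlim.congr fun n => ?_
  have hpos : 0 < ∑ k ∈ range (n + 1), α k := sum_pos (fun k _ => hα k) nonempty_range_add_one
  rw [sum_range_succ _ (n + 1), add_div, div_self hpos.ne', Function.comp_apply]

theorem tendsto_sum_range_comp_div {Δ : ℝ} {c : ℕ → ℕ} (hα : ∀ k, 0 < α k)
    (hα0 : Tendsto α atTop (𝓝 0)) (hdiv : ¬ Summable α)
    (hαΔ : Tendsto (fun n : ℕ => (∑ k ∈ range (⌊Δ * n⌋₊ + 1), α k) / ∑ k ∈ range (n + 1), α k)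
      atTop (𝓝 1))
    (hc : ∀ᶠ n : ℕ in atTop, ⌊Δ * n⌋₊ ≤ c n) (hc' : ∀ n, c n ≤ n + 1) :
    Tendsto (fun n => (∑ k ∈ range (c n + 1), α k) / ∑ k ∈ range (n + 1), α k) atTop (𝓝 1) := by
  have hmono : Monotone fun m => ∑ k ∈ range (m + 1), α k := fun a b h =>
    sum_le_sum_of_subset_of_nonneg (range_subset_range.2 (by omega)) fun k _ _ => (hα k).le
  have hpos : ∀ n, 0 < ∑ k ∈ range (n + 1), α k := fun n =>
    sum_pos (fun k _ => hα k) nonempty_range_add_one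
  refine tendsto_of_tendsto_of_tendsto_of_le_of_le' hαΔ
    (tendsto_sum_range_succ_succ_div hα hα0 hdiv) ?_ (.of_forall fun n => ?_)
  · filter_upwards [hc] with n hn
    exact div_le_div_of_nonneg_right (hmono hn) (hpos n).le
  · exact div_le_div_of_nonneg_right (hmono (hc' n)) (hpos n).le

theorem eventually_comp_le_mul {Δ B : ℝ} {n₀ : ℕ} {c : ℕ → ℕ} (hΔ : 0 < Δ)
    (hanti : AntitoneOn α (Set.Ici n₀)) (hB : ∀ n : ℕ, α ⌊Δ * n⌋₊ ≤ B * α n)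
    (hc : ∀ᶠ n : ℕ in atTop, ⌊Δ * n⌋₊ ≤ c n) :
    ∀ᶠ n in atTop, α (c n) ≤ B * α n := by
  have hfloor : ∀ᶠ n : ℕ in atTop, n₀ ≤ ⌊Δ * n⌋₊ :=
    (tendsto_nat_floor_atTop.comp
      (tendsto_natCast_atTop_atTop.const_mul_atTop hΔ)).eventually_ge_atTop n₀
  filter_upwards [hc, hfloor] with n hn hn₀
  exact (hanti (Set.mem_Ici.2 hn₀) (Set.mem_Ici.2 (hn₀.trans hn)) hn).trans (hB n)

theorem eventually_succ_le_comp {n₀ : ℕ} {c : ℕ → ℕ} (hanti : AntitoneOn α (Set.Ici n₀))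
    (hc : Tendsto c atTop atTop) (hc' : ∀ n, c n ≤ n + 1) :
    ∀ᶠ n in atTop, α (n + 1) ≤ α (c n) := by
  filter_upwards [hc.eventually_ge_atTop n₀] with n hn
  exact hanti (Set.mem_Ici.2 hn) (Set.mem_Ici.2 (hn.trans (hc' n))) (hc' n)

end Stepsize

noncomputable def passageTimes (a : ℕ → ℝ) (x : ℝ) (M : ℕ) (t : ℕ) : ℕ :=
  (fun n => firstPassage a n x)^[t] M

section PassageTimes

variable {a : ℕ → ℝ} {x : ℝ} {M : ℕ}

theorem passageTimes_zero : passageTimes a x M 0 = M := rfl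

theorem passageTimes_succ (t : ℕ) :
    passageTimes a x M (t + 1) = firstPassage a (passageTimes a x M t) x :=
  Function.iterate_succ_apply' _ t M

theorem passageTimes_strictMono (ha : ∀ k, 0 ≤ a k) (hdiv : ¬ Summable a) :
    StrictMono (passageTimes a x M) :=
  strictMono_nat_of_lt_succ fun t => by
    rw [passageTimes_succ]
    exact lt_firstPassage ha hdiv _ x

/-- Each passage adds at least `x / 2` once the terms have dropped below `x / 2`. -/
theorem mul_le_sum_Ioc_passageTimes (ha : ∀ k, 0 ≤ a k) (hdiv : ¬ Summable a)
    (hM : ∀ k ≥ M, a k ≤ x / 2) (T : ℕ) :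
    x / 2 * T ≤ ∑ k ∈ Ioc M (passageTimes a x M T), a k := by
  have hmono := (passageTimes_strictMono (x := x) (M := M) ha hdiv).monotone
  induction T with
  | zero => simp [passageTimes_zero]
  | succ T ih =>
    set e := passageTimes a x M
    obtain ⟨m, hm, hx⟩ := exists_lt_le_sum_Icc ha hdiv (e T) x
    obtain ⟨hlt, hle⟩ := lt_firstPassage_and_le_sum hm hx
    rw [← passageTimes_succ] at hlt hle
    have hMT : M ≤ e T := hmono T.zero_le
    rw [← add_sum_Ioc_eq_sum_Icc hlt.le] at hle
    rw [← sum_Ioc_consecutive _ hMT hlt.le]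
    push_cast
    linarith [hM (e T) hMT]

end PassageTimes

section LevelRatio

variable {ι : Type*} [DecidableEq ι] {Y : ℕ → Finset ι} {α : ℕ → ℝ} {q : ℝ}

/-- Telescoping along the passage times turns the accumulated clock sums into the sum of `α` along
the clock, up to the endpoint terms `α (ν (e t) i)`, which are negligible by Cesàro. -/
theorem tendsto_sum_clockSum_passageTimes_div (hα : ∀ k, 0 < α k)
    (hα0 : Tendsto α atTop (𝓝 0)) (hdiv : ¬ Summable α) {i : ι}
    (hν : Tendsto (visits Y i) atTop atTop)
    (hνsum : Tendsto (fun n => (∑ k ∈ range (visits Y i n + 1), α k) / ∑ k ∈ range (n + 1), α k)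
      atTop (𝓝 1))
    (hq : 0 < q) {M : ℕ} (hM : ∀ k ≥ M, α k ≤ q / 2) :
    Tendsto (fun T => (∑ t ∈ range T,
        clockSum α Y i (passageTimes α q M t) (passageTimes α q M (t + 1))) /
        ∑ k ∈ range (passageTimes α q M T + 1), α k) atTop (𝓝 1) := by
  set e := passageTimes α q M
  have hα' : ∀ k, 0 ≤ α k := fun k => (hα k).le
  have he : StrictMono e := passageTimes_strictMono hα' hdiv
  have hP := (tendsto_sum_range_succ_atTop hα' hdiv).comp he.tendsto_atTop
  set E : ℕ → ℝ := fun T => ∑ t ∈ range T, α (visits Y i (e t))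
  have hE : Tendsto (fun T => E T / ∑ k ∈ range (e T + 1), α k) atTop (𝓝 0) := by
    have hces := (hα0.comp (hν.comp he.tendsto_atTop)).cesaro.const_mul (2 / q)
    rw [mul_zero] at hces
    refine squeeze_zero' (.of_forall fun T => div_nonneg (sum_nonneg fun t _ => hα' _)
      (sum_nonneg fun k _ => hα' k)) ?_ hces
    filter_upwards [eventually_ge_atTop 1] with T hT
    have hTpos : (0 : ℝ) < T := by exact_mod_cast hT
    have hlin : q / 2 * T ≤ ∑ k ∈ range (e T + 1), α k := by
      have := mul_le_sum_Ioc_passageTimes hα' hdiv hM T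
      rw [sum_Ioc_eq_sub_sum_range α (a := M) (he.monotone T.zero_le)] at this
      linarith [sum_nonneg fun k (_ : k ∈ range (M + 1)) => hα' k]
    calc E T / ∑ k ∈ range (e T + 1), α k ≤ E T / (q / 2 * T) :=
          div_le_div_of_nonneg_left (sum_nonneg fun t _ => hα' _) (by positivity) hlin
      _ = 2 / q * ((T : ℝ)⁻¹ * E T) := by field_simp
  have hlim := hE.add ((hνsum.comp he.tendsto_atTop).sub
    ((tendsto_const_nhds (x := ∑ k ∈ range (visits Y i M + 1), α k)).div_atTop hP))
  rw [zero_add, sub_zero] at hlim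
  refine hlim.congr fun T => ?_
  simp only [Function.comp_apply]
  rw [sum_range_clockSum he.monotone, sum_Ioc_eq_sub_sum_range _ (visits_mono (he.monotone
    T.zero_le)), add_div, sub_div]
  rfl

/-- Summing numerator and denominator along the passage times gives ratios of sums, which tend to
`ℓ` by Stolz–Cesàro and to `1` by telescoping. -/
theorem clockSum_firstPassage_ratio_limit_eq_one (hα : ∀ k, 0 < α k)
    (hα0 : Tendsto α atTop (𝓝 0)) (hdiv : ¬ Summable α)
    (hν : ∀ i, Tendsto (visits Y i) atTop atTop)
    (hνsum : ∀ i, Tendsto (fun n => (∑ k ∈ range (visits Y i n + 1), α k) /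
      ∑ k ∈ range (n + 1), α k) atTop (𝓝 1))
    (hq : 0 < q) {i j : ι} {ℓ : ℝ}
    (h : Tendsto (fun n => clockSum α Y i n (firstPassage α n q) /
      clockSum α Y j n (firstPassage α n q)) atTop (𝓝 ℓ)) : ℓ = 1 := by
  obtain ⟨M, hM⟩ := eventually_atTop.1 (hα0.eventually (ge_mem_nhds (half_pos hq)))
  set e := passageTimes α q M
  have he : StrictMono e := passageTimes_strictMono (fun k => (hα k).le) hdiv
  have hi := tendsto_sum_clockSum_passageTimes_div hα hα0 hdiv (hν i) (hνsum i) hq hM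
  have hj := tendsto_sum_clockSum_passageTimes_div hα hα0 hdiv (hν j) (hνsum j) hq hM
  have hsum_j : Tendsto (fun T => ∑ t ∈ range T, clockSum α Y j (e t) (e (t + 1))) atTop atTop := by
    refine (hj.pos_mul_atTop one_pos ((tendsto_sum_range_succ_atTop (fun k => (hα k).le)
      hdiv).comp he.tendsto_atTop)).congr fun T => ?_
    exact div_mul_cancel₀ _ (sum_pos (fun k _ => hα k) nonempty_range_add_one).ne'
  have hterm : Tendsto (fun t => clockSum α Y i (e t) (e (t + 1)) /
      clockSum α Y j (e t) (e (t + 1))) atTop (𝓝 ℓ) := by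
    refine (h.comp he.tendsto_atTop).congr fun t => ?_
    simp only [Function.comp_apply, e, passageTimes_succ]
  have hratio := hi.div hj one_ne_zero
  rw [div_one] at hratio
  refine tendsto_nhds_unique (tendsto_sum_range_div_sum_range
    (fun t => clockSum_pos hα (he t.lt_succ_self).le) hsum_j hterm) (hratio.congr fun T => ?_)
  exact div_div_div_cancel_right₀ (sum_pos (fun k _ => hα k) nonempty_range_add_one).ne' _ _

end LevelRatio

section Levels

variable {ι : Type*} [DecidableEq ι] {Y : ℕ → Finset ι} {α : ℕ → ℝ} {q : ℝ}

theorem eventually_sub_le_sum_clockSum_firstPassage [Fintype ι] (hα : ∀ k, 0 < α k)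
    (hdiv : ¬ Summable α) (hg_low : ∀ᶠ k in atTop, α (k + 1) ≤ updateMass α Y k) (q : ℝ) :
    ∀ᶠ n in atTop, q - α n ≤ ∑ i, clockSum α Y i n (firstPassage α n q) := by
  filter_upwards [eventually_forall_ge_atTop.2 hg_low] with n hn
  obtain ⟨m, hm, hqm⟩ := exists_lt_le_sum_Icc (fun k => (hα k).le) hdiv n q
  obtain ⟨hlt, hle⟩ := lt_firstPassage_and_le_sum hm hqm
  have hshift := sum_Icc_add_le_add_sum_Icc hlt.le fun k hk => hn k (mem_Icc.1 hk).1
  have hmass := sum_updateMass_le_sum_clockSum (fun k => (hα k).le) hlt.le (Y := Y)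
  linarith [hα (firstPassage α n q + 1)]

/-- The clock sums of all components add up to about `q`, and they are comparable to each other. -/
theorem exists_pos_eventually_le_clockSum_firstPassage [Fintype ι] (hα : ∀ k, 0 < α k)
    (hα0 : Tendsto α atTop (𝓝 0)) (hdiv : ¬ Summable α)
    (hg_low : ∀ᶠ k in atTop, α (k + 1) ≤ updateMass α Y k) (hq : 0 < q) (j : ι)
    (hone : ∀ i, Tendsto (fun n => clockSum α Y i n (firstPassage α n q) /
      clockSum α Y j n (firstPassage α n q)) atTop (𝓝 1)) :
    ∃ c > 0, ∀ᶠ n in atTop, c ≤ clockSum α Y j n (firstPassage α n q) := by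
  have hcard : (0 : ℝ) < Fintype.card ι := by exact_mod_cast Fintype.card_pos_iff.2 ⟨j⟩
  refine ⟨q / (4 * Fintype.card ι), by positivity, ?_⟩
  have hle_two : ∀ᶠ n in atTop, ∀ i, clockSum α Y i n (firstPassage α n q) ≤
      2 * clockSum α Y j n (firstPassage α n q) := by
    refine eventually_all.2 fun i => ?_
    filter_upwards [(hone i).eventually (gt_mem_nhds one_lt_two)] with n hn
    rw [div_lt_iff₀ (clockSum_pos hα (lt_firstPassage (fun k => (hα k).le) hdiv n q).le)] at hn
    exact hn.le
  filter_upwards [hle_two, eventually_sub_le_sum_clockSum_firstPassage hα hdiv hg_low q,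
    hα0.eventually (ge_mem_nhds (half_pos hq))] with n htwo hsum hsmall
  have hsum_le : ∑ i, clockSum α Y i n (firstPassage α n q) ≤
      Fintype.card ι * (2 * clockSum α Y j n (firstPassage α n q)) := by
    simpa only [sum_const, card_univ, nsmul_eq_mul] using sum_le_sum fun i (_ : i ∈ univ) => htwo i
  rw [div_le_iff₀ (by positivity)]
  nlinarith

theorem eventually_clockSum_firstPassage_le_add (hα : ∀ k, 0 < α k)
    (hα0 : Tendsto α atTop (𝓝 0)) (hdiv : ¬ Summable α) {i : ι} {B : ℝ} (hB : 0 ≤ B)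
    (hup : ∀ᶠ k in atTop, α (visits Y i k) ≤ B * α k) {q' δ : ℝ} (hq : 0 < q) (hqq' : q ≤ q')
    (hδ : 0 < δ) :
    ∀ᶠ n in atTop, clockSum α Y i n (firstPassage α n q') ≤
      clockSum α Y i n (firstPassage α n q) + B * (q' - q + δ) := by
  filter_upwards [eventually_forall_ge_atTop.2 (hup.and ((hα0.eventually (ge_mem_nhds hδ)).and
    (hα0.eventually (gt_mem_nhds hq))))] with n hn
  obtain ⟨m, hm, hqm⟩ := exists_lt_le_sum_Icc (fun k => (hα k).le) hdiv n q'
  obtain ⟨hlt', hle'⟩ := lt_firstPassage_and_le_sum hm hqm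
  obtain ⟨hlt, hle⟩ := lt_firstPassage_and_le_sum hlt' (hqq'.trans hle')
  have hLL' := firstPassage_mono hm hqm hqq'
  set L := firstPassage α n q
  set L' := firstPassage α n q'
  have hinc : ∑ k ∈ Ioc L L', (if i ∈ Y k then α (visits Y i k) else 0) ≤
      B * ∑ k ∈ Ioc L L', α k := by
    rw [mul_sum]
    refine sum_le_sum fun k hk => ?_
    split
    · exact (hn k (by linarith [(mem_Ioc.1 hk).1])).1
    · exact mul_nonneg hB (hα k).le
  have hmass : ∑ k ∈ Icc n L, α k + ∑ k ∈ Ioc L L', α k = ∑ k ∈ Icc n L', α k := by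
    rw [← add_sum_Ioc_eq_sum_Icc hlt.le, ← add_sum_Ioc_eq_sum_Icc (hlt.le.trans hLL'), add_assoc,
      sum_Ioc_consecutive _ hlt.le hLL']
  have hupper := sum_Icc_firstPassage_lt hm hqm ((hn n le_rfl).2.2.trans_le hqq')
  have hαL' := (hn L' hlt'.le).2.1
  rw [clockSum_eq_add_sum_updates_of_le hlt.le hLL']
  have : ∑ k ∈ Ioc L L', α k ≤ q' - q + δ := by linarith
  nlinarith

/-- The random time `Ñ n` is squeezed between two neighbouring levels of a fine rational grid. The
ratio tends to `1` at every grid level, and between neighbouring levels the clock sums move by at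
most `B (δ + δ)`, which is small against the lower bound `c`. -/
theorem eventually_clockSum_le_one_add_mul (hα : ∀ k, 0 < α k) (hα0 : Tendsto α atTop (𝓝 0))
    (hdiv : ¬ Summable α) {B : ℝ} (hB : 0 ≤ B) {i j : ι}
    (hup : ∀ᶠ k in atTop, α (visits Y i k) ≤ B * α k)
    (hone : ∀ q : ℚ, 0 < q → Tendsto (fun n => clockSum α Y i n (firstPassage α n q) /
      clockSum α Y j n (firstPassage α n q)) atTop (𝓝 1))
    {Ñ : ℕ → ℕ} {r : ℚ} {R c : ℝ} (hr : 0 < r)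
    (hÑ : ∀ᶠ n in atTop, n < Ñ n ∧ r ≤ ∑ k ∈ Icc n (Ñ n), α k ∧ ∑ k ∈ Icc n (Ñ n), α k ≤ R)
    (hc : 0 < c) (hlow : ∀ᶠ n in atTop, c ≤ clockSum α Y j n (firstPassage α n r))
    {ε : ℝ} (hε : 0 < ε) :
    ∀ᶠ n in atTop, clockSum α Y i n (Ñ n) ≤ (1 + ε) * clockSum α Y j n (Ñ n) := by
  have hα' : ∀ k, 0 ≤ α k := fun k => (hα k).le
  obtain ⟨δ, hδ, hδε⟩ := exists_rat_btwn (show (0 : ℝ) < ε * c / (4 * (B + 1)) by positivity)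
  have hδ' : (0 : ℚ) < δ := by exact_mod_cast hδ
  obtain ⟨K, hK⟩ := exists_nat_gt ((R - r) / δ)
  set level : ℕ → ℚ := fun t => r + t * δ
  have hlevel : ∀ t, (level t : ℝ) = r + t * δ := fun t => by push_cast [level]; rfl
  have hlevel_pos : ∀ t, 0 < level t := fun t => by positivity
  have hratio : ∀ᶠ n in atTop, ∀ t ∈ range K, clockSum α Y i n (firstPassage α n (level t)) ≤
      (1 + ε / 2) * clockSum α Y j n (firstPassage α n (level t)) := by
    refine (eventually_all_finset _).2 fun t _ => ?_
    filter_upwards [(hone _ (hlevel_pos t)).eventually (gt_mem_nhds (by linarith : 1 < 1 + ε / 2))]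
      with n hn
    rw [div_lt_iff₀ (clockSum_pos hα (lt_firstPassage hα' hdiv n _).le)] at hn
    exact hn.le
  have hstep : ∀ᶠ n in atTop, ∀ t ∈ range K,
      clockSum α Y i n (firstPassage α n (level (t + 1))) ≤
        clockSum α Y i n (firstPassage α n (level t)) + B * (δ + δ) := by
    refine (eventually_all_finset _).2 fun t _ => ?_
    have hdiff : (level (t + 1) : ℝ) - level t = δ := by rw [hlevel, hlevel]; push_cast; ring
    have hstep := eventually_clockSum_firstPassage_le_add hα hα0 hdiv hB hup
      (q := level t) (q' := level (t + 1)) (by exact_mod_cast hlevel_pos t) (by linarith) hδ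
    rwa [hdiff] at hstep
  filter_upwards [hratio, hstep, hÑ, hlow] with n hratio hstep ⟨hlt, hrσ, hσR⟩ hlow
  obtain ⟨t, htK, hlow_t, hup_t⟩ := exists_lt_add_mul_le_lt hδ hrσ hσR hK
  rw [← hlevel] at hlow_t
  rw [← Nat.cast_succ, ← hlevel] at hup_t
  have hj_t : clockSum α Y j n (firstPassage α n (level t)) ≤ clockSum α Y j n (Ñ n) :=
    clockSum_mono hα' (firstPassage_le hlt hlow_t)
  have hi_t : clockSum α Y i n (Ñ n) ≤ clockSum α Y i n (firstPassage α n (level (t + 1))) :=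
    clockSum_mono hα' (lt_firstPassage_of_sum_lt hα' hdiv hup_t).le
  have hc_t : c ≤ clockSum α Y j n (Ñ n) := by
    have hr_t : (r : ℝ) ≤ level t := by rw [hlevel]; nlinarith [(t.cast_nonneg : (0 : ℝ) ≤ t)]
    exact hlow.trans ((clockSum_mono hα' (firstPassage_mono hlt hlow_t hr_t)).trans hj_t)
  have hB_δ : B * (δ + δ) ≤ ε / 2 * c := by
    rw [lt_div_iff₀ (by positivity)] at hδε
    nlinarith
  have htK' := mem_range.2 htK
  calc clockSum α Y i n (Ñ n)
      ≤ (1 + ε / 2) * clockSum α Y j n (firstPassage α n (level t)) + B * (δ + δ) :=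
        hi_t.trans ((hstep t htK').trans (add_le_add_left (hratio t htK') _))
    _ ≤ (1 + ε / 2) * clockSum α Y j n (Ñ n) + ε / 2 * clockSum α Y j n (Ñ n) :=
        add_le_add (by gcongr) (hB_δ.trans (by gcongr))
    _ = (1 + ε) * clockSum α Y j n (Ñ n) := by ring

theorem tendsto_clockSum_firstPassage_updateMass_div_of_tendsto_one [Fintype ι]
    (hα : ∀ k, 0 < α k) (hα0 : Tendsto α atTop (𝓝 0)) (hdiv : ¬ Summable α) {B : ℝ} (hB : 0 < B)
    (hup : ∀ i, ∀ᶠ k in atTop, α (visits Y i k) ≤ B * α k)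
    (hg_low : ∀ᶠ k in atTop, α (k + 1) ≤ updateMass α Y k)
    (hone : ∀ q : ℚ, 0 < q → ∀ i j, Tendsto (fun n => clockSum α Y i n (firstPassage α n q) /
      clockSum α Y j n (firstPassage α n q)) atTop (𝓝 1))
    {z : ℝ} (hz : 0 < z) (i j : ι) :
    Tendsto (fun n => clockSum α Y i n (firstPassage (updateMass α Y) n z) /
      clockSum α Y j n (firstPassage (updateMass α Y) n z)) atTop (𝓝 1) := by
  have hg_up : ∀ᶠ k in atTop, updateMass α Y k ≤ Fintype.card ι * B * α k := by
    filter_upwards [eventually_all.2 hup] with k hk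
    rw [mul_assoc]
    exact updateMass_le (fun k => (hα k).le) hk
  have hC : (0 : ℝ) < Fintype.card ι * B :=
    mul_pos (by exact_mod_cast Fintype.card_pos_iff.2 ⟨i⟩) hB
  have hÑ := eventually_sum_Icc_firstPassage_mem hα hα0 hdiv hC hz hg_low hg_up
  obtain ⟨r, hr, hrz⟩ := exists_rat_btwn (div_pos hz hC)
  have hr' : (0 : ℚ) < r := by exact_mod_cast hr
  have hÑr : ∀ᶠ n in atTop, n < firstPassage (updateMass α Y) n z ∧
      r ≤ ∑ k ∈ Icc n (firstPassage (updateMass α Y) n z), α k ∧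
      ∑ k ∈ Icc n (firstPassage (updateMass α Y) n z), α k ≤ 2 * z := by
    filter_upwards [hÑ] with n ⟨hlt, hlow, hup⟩
    exact ⟨hlt, hrz.le.trans hlow, hup⟩
  have hle : ∀ i j, ∀ ε > 0, ∀ᶠ n in atTop,
      clockSum α Y i n (firstPassage (updateMass α Y) n z) ≤
        (1 + ε) * clockSum α Y j n (firstPassage (updateMass α Y) n z) := fun i j ε hε => by
    obtain ⟨c, hc, hlow⟩ := exists_pos_eventually_le_clockSum_firstPassage hα hα0 hdiv hg_low hr j
      fun i => hone r hr' i j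
    exact eventually_clockSum_le_one_add_mul hα hα0 hdiv hB.le (hup i) (fun q hq => hone q hq i j)
      hr' hÑr hc hlow hε
  have hpos : ∀ i, ∀ᶠ n in atTop, 0 < clockSum α Y i n (firstPassage (updateMass α Y) n z) :=
    fun i => hÑ.mono fun n hn => clockSum_pos hα hn.1.le
  exact tendsto_div_nhds_one_of_eventually_le_mul (hpos i) (hpos j) (hle i j) (hle j i)

end Levels

theorem tendsto_clockSum_firstPassage_updateMass_div {ι : Type*} [DecidableEq ι] [Fintype ι]
    {Y : ℕ → Finset ι} {α : ℕ → ℝ} (hα : ∀ k, 0 < α k) (hα0 : Tendsto α atTop (𝓝 0))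
    (hdiv : ¬ Summable α) {n₀ : ℕ} (hanti : AntitoneOn α (Set.Ici n₀)) {Δ B : ℝ} (hΔ : 0 < Δ)
    (hB : 0 < B) (hBΔ : ∀ n : ℕ, α ⌊Δ * n⌋₊ ≤ B * α n)
    (hαΔ : Tendsto (fun n : ℕ => (∑ k ∈ range (⌊Δ * n⌋₊ + 1), α k) / ∑ k ∈ range (n + 1), α k)
      atTop (𝓝 1))
    (hYne : ∀ k, (Y k).Nonempty) (hfloor : ∀ i, ∀ᶠ n : ℕ in atTop, ⌊Δ * n⌋₊ ≤ visits Y i n)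
    (hlim : ∀ q : ℚ, 0 < q → ∀ i j, ∃ ℓ, Tendsto (fun n => clockSum α Y i n (firstPassage α n q) /
      clockSum α Y j n (firstPassage α n q)) atTop (𝓝 ℓ))
    {z : ℝ} (hz : 0 < z) (i j : ι) :
    Tendsto (fun n => clockSum α Y i n (firstPassage (updateMass α Y) n z) /
      clockSum α Y j n (firstPassage (updateMass α Y) n z)) atTop (𝓝 1) := by
  have hν : ∀ i, Tendsto (visits Y i) atTop atTop := fun i => tendsto_atTop_mono' _ (hfloor i)
    (tendsto_nat_floor_atTop.comp (tendsto_natCast_atTop_atTop.const_mul_atTop hΔ))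
  have hνsum := fun i => tendsto_sum_range_comp_div hα hα0 hdiv hαΔ (hfloor i) visits_le
  have hone : ∀ q : ℚ, 0 < q → ∀ i j, Tendsto (fun n => clockSum α Y i n (firstPassage α n q) /
      clockSum α Y j n (firstPassage α n q)) atTop (𝓝 1) := fun q hq i j => by
    obtain ⟨ℓ, h⟩ := hlim q hq i j
    rwa [← clockSum_firstPassage_ratio_limit_eq_one hα hα0 hdiv hν hνsum (by exact_mod_cast hq) h]
  have hg_low : ∀ᶠ k in atTop, α (k + 1) ≤ updateMass α Y k := by
    filter_upwards [eventually_all.2 fun i => eventually_succ_le_comp hanti (hν i) visits_le]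
      with k hk using le_updateMass (hYne k) (fun k => (hα k).le) hk
  exact tendsto_clockSum_firstPassage_updateMass_div_of_tendsto_one hα hα0 hdiv hB
    (fun i => eventually_comp_le_mul hΔ hanti hBΔ (hfloor i)) hg_low hone hz i j

end AsyncStepsize

open AsyncStepsize in
theorem accumulated_stepsize_ratio_tendsto_one_general
    {d : ℕ}
    {Ω : Type*} [m0 : MeasurableSpace Ω] (μ : Measure Ω)
    (Y : ℕ → Ω → Finset (Fin d)) (hYne : ∀ n ω, (Y n ω).Nonempty)
    (ν : ℕ → Fin d → Ω → ℕ)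
    (hν : ∀ n i ω, ν n i ω = ∑ k ∈ Finset.range (n + 1), if i ∈ Y k ω then 1 else 0)
    (α : ℕ → ℝ) (hαpos : ∀ n, 0 < α n)
    -- Assumption 3(i)
    (hαdiv : ¬ Summable α) (hαsq : Summable fun n => (α n) ^ 2)
    (hαmono : ∃ n₀ : ℕ, ∀ n ≥ n₀, α (n + 1) ≤ α n)
    -- Assumption 3(ii)
    (hαratio : ∀ z : ℝ, 0 < z → z < 1 → ∃ B : ℝ, ∀ n : ℕ, α ⌊z * (n : ℝ)⌋₊ / α n ≤ B)
    -- Assumption 3(iii)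
    (hαsum : ∀ z : ℝ, 0 < z → z < 1 → ∀ ε > (0 : ℝ), ∃ n₀ : ℕ, ∀ n ≥ n₀, ∀ y ∈ Set.Icc z 1,
      |(∑ k ∈ Finset.range (⌊y * (n : ℝ)⌋₊ + 1), α k) / (∑ k ∈ Finset.range (n + 1), α k) - 1| ≤ ε)
    -- Assumption 4, with N(n,x) := min{m > n : Σ_{k=n}^m α_k ≥ x}
    (N : ℕ → ℝ → ℕ)
    (hN : ∀ n z, N n z = sInf {m | n < m ∧ z ≤ ∑ k ∈ Finset.Icc n m, α k})
    (Δ : ℝ) (hΔ : 0 < Δ)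
    (hfreq : ∀ i, ∀ᵐ ω ∂μ, Δ ≤ Filter.liminf (fun n => (ν n i ω : ℝ) / (n : ℝ)) atTop)
    (hratio : ∀ z : ℝ, 0 < z → ∀ i j : Fin d, ∀ᵐ ω ∂μ, ∃ ℓ : ℝ,
      Filter.Tendsto (fun n =>
        (∑ k ∈ Finset.Icc (ν n i ω) (ν (N n z) i ω), α k) /
        (∑ k ∈ Finset.Icc (ν n j ω) (ν (N n z) j ω), α k)) Filter.atTop (nhds ℓ))
    -- Ñ(n,x)
    (Ntil : ℕ → ℝ → Ω → ℕ)
    (hNtil : ∀ n z ω, Ntil n z ω =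
      sInf {m | n < m ∧ z ≤ ∑ k ∈ Finset.Icc n m, ∑ i ∈ Y k ω, α (ν k i ω)}) :
    ∀ z : ℝ, 0 < z → ∀ᵐ ω ∂μ, ∀ i j : Fin d,
      Tendsto (fun n =>
        (∑ k ∈ Finset.Icc (ν n i ω) (ν (Ntil n z ω) i ω), α k) /
        (∑ k ∈ Finset.Icc (ν n j ω) (ν (Ntil n z ω) j ω), α k)) atTop (nhds 1) := by
  intro z hz
  obtain rfl : ν = fun n i ω => visits (Y · ω) i n := funext₃ hν
  obtain rfl : N = firstPassage α := funext₂ hN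
  obtain rfl : Ntil = fun n z ω => firstPassage (updateMass α (Y · ω)) n z := funext₃ hNtil
  obtain ⟨n₀, hmono⟩ := hαmono
  set Δ' := min (Δ / 2) (1 / 2)
  have hΔ' : 0 < Δ' := lt_min (half_pos hΔ) one_half_pos
  have hΔ'1 : Δ' < 1 := (min_le_right _ _).trans_lt one_half_lt_one
  obtain ⟨B, hB⟩ := hαratio Δ' hΔ' hΔ'1
  have hαΔ : Tendsto (fun n : ℕ => (∑ k ∈ Finset.range (⌊Δ' * n⌋₊ + 1), α k) /
      ∑ k ∈ Finset.range (n + 1), α k) atTop (nhds 1) :=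
    Metric.tendsto_atTop.2 fun ε hε =>
      let ⟨m, hm⟩ := hαsum Δ' hΔ' hΔ'1 (ε / 2) (half_pos hε)
      ⟨m, fun n hn => (hm n hn Δ' ⟨le_rfl, hΔ'1.le⟩).trans_lt (half_lt_self hε)⟩
  have hfloor : ∀ᵐ ω ∂μ, ∀ i, ∀ᶠ n : ℕ in atTop, ⌊Δ' * n⌋₊ ≤ visits (Y · ω) i n :=
    ae_all_iff.2 fun i => (hfreq i).mono fun ω =>
      eventually_floor_mul_le_of_lt_liminf ((min_le_left _ _).trans_lt (half_lt_self hΔ))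
  have hlim : ∀ᵐ ω ∂μ, ∀ q : ℚ, 0 < q → ∀ i j, ∃ ℓ, Tendsto (fun n =>
      clockSum α (Y · ω) i n (firstPassage α n q) / clockSum α (Y · ω) j n (firstPassage α n q))
      atTop (nhds ℓ) :=
    ae_all_iff.2 fun q => eventually_imp_distrib_left.2 fun hq =>
      ae_all_iff.2 fun i => ae_all_iff.2 fun j => hratio q (by exact_mod_cast hq) i j
  filter_upwards [hfloor, hlim] with ω hfloorω hlimω i j
  exact tendsto_clockSum_firstPassage_updateMass_div hαpos
    (by simpa [Real.sqrt_sq (hαpos _).le] using hαsq.tendsto_atTop_zero.sqrt) hαdiv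
    (antitoneOn_nat_Ici_of_succ_le hmono) hΔ'
    (one_pos.trans_le (by simpa [div_self (hαpos 0).ne'] using hB 0))
    (fun n => (div_le_iff₀ (hαpos n)).1 (hB n)) hαΔ (hYne · ω) hfloorω hlimω hz i j

/-- **Lemma 3.** Under Assumptions 3 and 4, with
`Ñ(n,x) := min{m > n : Σ_{k=n}^m Σ_{i∈Y_k} α_{ν(k,i)} ≥ x}`, for each `x > 0`,
almost surely the component-wise accumulated stepsizes up to time `Ñ(n,x)` are
asymptotically balanced: the ratios tend to `1` for all `i, j`. -/
theorem accumulated_stepsize_ratio_tendsto_one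
    {d : ℕ} (hd : 1 ≤ d)
    {Ω : Type*} [m0 : MeasurableSpace Ω] (μ : Measure Ω) [IsProbabilityMeasure μ]
    (Y : ℕ → Ω → Finset (Fin d)) (hYne : ∀ n ω, (Y n ω).Nonempty)
    (ν : ℕ → Fin d → Ω → ℕ)
    (hν : ∀ n i ω, ν n i ω = ∑ k ∈ Finset.range (n + 1), if i ∈ Y k ω then 1 else 0)
    (α : ℕ → ℝ) (hαpos : ∀ n, 0 < α n)
    -- Assumption 3(i)
    (hαdiv : ¬ Summable α) (hαsq : Summable fun n => (α n) ^ 2)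
    (hαmono : ∃ n₀ : ℕ, ∀ n ≥ n₀, α (n + 1) ≤ α n)
    -- Assumption 3(ii)
    (hαratio : ∀ z : ℝ, 0 < z → z < 1 → ∃ B : ℝ, ∀ n : ℕ, α ⌊z * (n : ℝ)⌋₊ / α n ≤ B)
    -- Assumption 3(iii)
    (hαsum : ∀ z : ℝ, 0 < z → z < 1 → ∀ ε > (0 : ℝ), ∃ n₀ : ℕ, ∀ n ≥ n₀, ∀ y ∈ Set.Icc z 1,
      |(∑ k ∈ Finset.range (⌊y * (n : ℝ)⌋₊ + 1), α k) / (∑ k ∈ Finset.range (n + 1), α k) - 1| ≤ ε)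
    -- Assumption 4, with N(n,x) := min{m > n : Σ_{k=n}^m α_k ≥ x}
    (N : ℕ → ℝ → ℕ)
    (hN : ∀ n z, N n z = sInf {m | n < m ∧ z ≤ ∑ k ∈ Finset.Icc n m, α k})
    (Δ : ℝ) (hΔ : 0 < Δ)
    (hfreq : ∀ i, ∀ᵐ ω ∂μ, Δ ≤ Filter.liminf (fun n => (ν n i ω : ℝ) / (n : ℝ)) atTop)
    (hratio : ∀ z : ℝ, 0 < z → ∀ i j : Fin d, ∀ᵐ ω ∂μ, ∃ ℓ : ℝ,
      Filter.Tendsto (fun n =>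
        (∑ k ∈ Finset.Icc (ν n i ω) (ν (N n z) i ω), α k) /
        (∑ k ∈ Finset.Icc (ν n j ω) (ν (N n z) j ω), α k)) Filter.atTop (nhds ℓ))
    -- Ñ(n,x)
    (Ntil : ℕ → ℝ → Ω → ℕ)
    (hNtil : ∀ n z ω, Ntil n z ω =
      sInf {m | n < m ∧ z ≤ ∑ k ∈ Finset.Icc n m, ∑ i ∈ Y k ω, α (ν k i ω)}) :
    ∀ z : ℝ, 0 < z → ∀ᵐ ω ∂μ, ∀ i j : Fin d,
      Tendsto (fun n =>
        (∑ k ∈ Finset.Icc (ν n i ω) (ν (Ntil n z ω) i ω), α k) /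
        (∑ k ∈ Finset.Icc (ν n j ω) (ν (Ntil n z ω) j ω), α k)) atTop (nhds 1) :=
  accumulated_stepsize_ratio_tendsto_one_general (m0 := m0) μ Y hYne ν hν α hαpos hαdiv hαsq hαmono
    hαratio hαsum N hN Δ hΔ hfreq hratio Ntil hNtil
end

section
/- Under Assumptions 3 and 4, for each x > 0 and all i, j ∈ I, the almost-sure limit lim_{n→∞} (Σ_{k=ν(n,i)}^{ν(N(n,x),i)} α_k)/(Σ_{k=ν(n,j)}^{ν(N(n,x),j)} α_k) appearing in Assumption 4(ii) equals 1 almost surely. -/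
/-!
Let `T n = α 0 + ⋯ + α n`. Iterating `n ↦ N(n, z)` from `0` gives times `s₀ < s₁ < ⋯`; let `a_m`
and `b_m` be the window sums for `i` and `j` between `s_m` and `s_{m+1}`. Along this subsequence
`a_m / b_m → ℓ`, so by Stolz–Cesàro `(∑_{m<M} a_m) / (∑_{m<M} b_m) → ℓ`. Consecutive windows share
only an endpoint, so `∑_{m<M} a_m` telescopes to `T(ν(s_M, i))` up to an error `o(M)`, because
`α → 0`; and `M = O(T(s_M))` since every window carries mass at least `z`. As `ν(n, i) ≥ x n`
eventually, Assumption 3(iii) gives `T(ν(s_M, i)) ~ T(s_M)`. The same holds for `j`, so the ratio of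
the partial sums also tends to `1`.
-/

open MeasureTheory Filter Asymptotics Finset Topology

def partialSum (α : ℕ → ℝ) (n : ℕ) : ℝ := ∑ k ∈ range (n + 1), α k

section PartialSum

variable {α : ℕ → ℝ}

lemma partialSum_nonneg (hα : ∀ n, 0 ≤ α n) (n : ℕ) : 0 ≤ partialSum α n :=
  sum_nonneg fun k _ => hα k

lemma partialSum_succ (n : ℕ) : partialSum α (n + 1) = partialSum α n + α (n + 1) :=
  sum_range_succ _ _

lemma partialSum_mono (hα : ∀ n, 0 ≤ α n) : Monotone (partialSum α) :=
  monotone_nat_of_le_succ fun n => by rw [partialSum_succ]; linarith [hα (n + 1)]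

lemma tendsto_partialSum_atTop (hα : ∀ n, 0 ≤ α n) (hdiv : ¬ Summable α) :
    Tendsto (partialSum α) atTop atTop :=
  ((not_summable_iff_tendsto_nat_atTop_of_nonneg hα).1 hdiv).comp (tendsto_add_atTop_nat 1)

lemma sum_Icc_eq_partialSum {p q : ℕ} (h : p ≤ q) :
    ∑ k ∈ Icc p q, α k = partialSum α q - partialSum α p + α p := by
  rw [← Ico_add_one_right_eq_Icc, sum_Ico_eq_sub _ (by omega), partialSum, partialSum,
    sum_range_succ _ p]
  ring

lemma sum_range_sum_Icc_eq {p : ℕ → ℕ} (hp : Monotone p) (M : ℕ) :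
    ∑ m ∈ range M, ∑ k ∈ Icc (p m) (p (m + 1)), α k
      = partialSum α (p M) - partialSum α (p 0) + ∑ m ∈ range M, α (p m) := by
  rw [sum_congr rfl fun m _ => sum_Icc_eq_partialSum (hp m.le_succ), sum_add_distrib,
    sum_range_sub (fun m => partialSum α (p m))]

lemma lt_and_le_sum_Icc_sInf (hα : ∀ n, 0 ≤ α n) (hT : Tendsto (partialSum α) atTop atTop)
    (n : ℕ) (z : ℝ) :
    n < sInf {m | n < m ∧ z ≤ ∑ k ∈ Icc n m, α k} ∧
      z ≤ ∑ k ∈ Icc n (sInf {m | n < m ∧ z ≤ ∑ k ∈ Icc n m, α k}), α k := by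
  obtain ⟨m, hm, hnm⟩ := ((hT.eventually_ge_atTop (z + partialSum α n)).and
    (eventually_gt_atTop n)).exists
  refine Nat.sInf_mem (s := {m | n < m ∧ z ≤ ∑ k ∈ Icc n m, α k}) ⟨m, hnm, ?_⟩
  rw [sum_Icc_eq_partialSum hnm.le]
  linarith [hα n]

lemma isEquivalent_partialSum_succ (hα : Tendsto α atTop (𝓝 0))
    (hT : Tendsto (partialSum α) atTop atTop) :
    (fun n => partialSum α (n + 1)) ~[atTop] partialSum α := by
  have hsmall : (fun n => α (n + 1)) =o[atTop] partialSum α :=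
    (hα.comp (tendsto_add_atTop_nat 1)).isBigO_one ℝ |>.trans_isLittleO <|
      isLittleO_const_left.2 <| Or.inr <| tendsto_norm_atTop_atTop.comp hT
  refine hsmall.congr_left fun n => ?_
  simp [partialSum_succ]

end PartialSum

section SlowVariation

variable {α : ℕ → ℝ} {x : ℝ}

lemma tendsto_partialSum_comp_div_of_le
    (hsum : ∀ ε > (0 : ℝ), ∃ n₀ : ℕ, ∀ n ≥ n₀, ∀ y ∈ Set.Icc x 1,
      |partialSum α ⌊y * (n : ℝ)⌋₊ / partialSum α n - 1| ≤ ε)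
    {g : ℕ → ℕ} (hg : ∀ᶠ n in atTop, x * n ≤ g n ∧ g n ≤ n) :
    Tendsto (fun n => partialSum α (g n) / partialSum α n) atTop (𝓝 1) := by
  refine Metric.tendsto_nhds.2 fun ε hε => ?_
  obtain ⟨n₀, hn₀⟩ := hsum (ε / 2) (half_pos hε)
  filter_upwards [hg, eventually_ge_atTop (max n₀ 1)] with n ⟨hxg, hgn⟩ hn
  have hn0 : (0 : ℝ) < n := by exact_mod_cast (le_max_right _ _).trans hn
  have hy : (g n : ℝ) / n ∈ Set.Icc x 1 :=
    ⟨(le_div_iff₀ hn0).2 hxg, (div_le_one hn0).2 (by exact_mod_cast hgn)⟩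
  have h := hn₀ n ((le_max_left _ _).trans hn) _ hy
  rw [div_mul_cancel₀ _ hn0.ne', Nat.floor_natCast] at h
  rw [Real.dist_eq]
  linarith

lemma isEquivalent_partialSum_comp (hα0 : ∀ n, 0 ≤ α n) (hα : Tendsto α atTop (𝓝 0))
    (hT : Tendsto (partialSum α) atTop atTop) (hx : x ≤ 1)
    (hsum : ∀ ε > (0 : ℝ), ∃ n₀ : ℕ, ∀ n ≥ n₀, ∀ y ∈ Set.Icc x 1,
      |partialSum α ⌊y * (n : ℝ)⌋₊ / partialSum α n - 1| ≤ ε)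
    {g : ℕ → ℕ} (hg_le : ∀ n, g n ≤ n + 1) (hg : ∀ᶠ n in atTop, x * n ≤ g n) :
    (fun n => partialSum α (g n)) ~[atTop] partialSum α := by
  have hT0 : ∀ᶠ n in atTop, partialSum α n ≠ 0 := hT.eventually_ne_atTop 0
  rw [isEquivalent_iff_tendsto_one hT0]
  have hlower := tendsto_partialSum_comp_div_of_le hsum (g := fun n => min (g n) n) <|
    hg.mono fun n hn => ⟨by simpa using ⟨hn, mul_le_of_le_one_left n.cast_nonneg hx⟩,
      min_le_right _ _⟩
  have hupper := (isEquivalent_iff_tendsto_one hT0).1 (isEquivalent_partialSum_succ hα hT)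
  refine tendsto_of_tendsto_of_tendsto_of_le_of_le hlower hupper (fun n => ?_) fun n => ?_
  · exact div_le_div_of_nonneg_right (partialSum_mono hα0 (min_le_left _ _))
      (partialSum_nonneg hα0 n)
  · exact div_le_div_of_nonneg_right (partialSum_mono hα0 (hg_le n)) (partialSum_nonneg hα0 n)

end SlowVariation

lemma isLittleO_sum_range_natCast {c : ℕ → ℝ} (hc : Tendsto c atTop (𝓝 0)) :
    (fun M => ∑ m ∈ range M, c m) =o[atTop] fun M => (M : ℝ) := by
  simpa using ((isLittleO_one_iff ℝ).2 hc).sum_range (fun _ => zero_le_one)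
    (by simpa using tendsto_natCast_atTop_atTop)

/-- The Stolz–Cesàro theorem. -/
lemma tendsto_sum_range_div_sum_range {a b : ℕ → ℝ} {ℓ : ℝ} (hb : ∀ m, 0 < b m)
    (hB : Tendsto (fun M => ∑ m ∈ range M, b m) atTop atTop)
    (h : Tendsto (fun m => a m / b m) atTop (𝓝 ℓ)) :
    Tendsto (fun M => (∑ m ∈ range M, a m) / ∑ m ∈ range M, b m) atTop (𝓝 ℓ) := by
  have hsmall : (fun m => a m - ℓ * b m) =o[atTop] b := by
    refine (isLittleO_iff_tendsto' (Eventually.of_forall fun m hm => absurd hm (hb m).ne')).2 ?_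
    refine (tendsto_sub_nhds_zero_iff.2 h).congr fun m => ?_
    simp [sub_div, mul_div_assoc, div_self (hb m).ne']
  have hlim := (hsmall.sum_range (fun m => (hb m).le) hB).tendsto_div_nhds_zero
  refine tendsto_sub_nhds_zero_iff.1 (hlim.congr' ?_)
  filter_upwards [hB.eventually_gt_atTop 0] with M hM
  simp [sum_sub_distrib, ← mul_sum, sub_div, mul_div_assoc, div_self hM.ne']

section Windows

variable {α : ℕ → ℝ} {s : ℕ → ℕ} {z : ℝ}

lemma natCast_isBigO_partialSum_comp (hα0 : ∀ n, 0 ≤ α n) (hα : Tendsto α atTop (𝓝 0))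
    (hs : StrictMono s) (hz : 0 < z) (hblock : ∀ m, z ≤ ∑ k ∈ Icc (s m) (s (m + 1)), α k) :
    (fun M : ℕ => (M : ℝ)) =O[atTop] fun M => partialSum α (s M) := by
  refine IsBigO.of_bound (2 / z) ?_
  filter_upwards [(isLittleO_sum_range_natCast (hα.comp hs.tendsto_atTop)).bound (half_pos hz)]
    with M hM
  have hlower : z * M ≤ partialSum α (s M) - partialSum α (s 0) + ∑ m ∈ range M, α (s m) := by
    rw [← sum_range_sum_Icc_eq hs.monotone]
    simpa [mul_comm] using card_nsmul_le_sum (range M) _ z fun m _ => hblock m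
  rw [Real.norm_natCast, Real.norm_of_nonneg (partialSum_nonneg hα0 _), div_mul_eq_mul_div,
    le_div_iff₀ hz]
  have hR : ∑ m ∈ range M, α (s m) ≤ z / 2 * M := by
    simpa [Real.norm_of_nonneg (sum_nonneg fun m _ => hα0 (s m))] using hM
  linarith [partialSum_nonneg hα0 (s 0)]

lemma tendsto_atTop_of_eventually_mul_le {u : ℕ → ℕ} {x : ℝ} (hx : 0 < x)
    (hu : ∀ᶠ n in atTop, x * n ≤ u n) : Tendsto u atTop atTop :=
  tendsto_natCast_atTop_iff.1 <|
    tendsto_atTop_mono' atTop hu (tendsto_natCast_atTop_atTop.const_mul_atTop hx)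

lemma isEquivalent_sum_range_sum_Icc {x : ℝ} (hα0 : ∀ n, 0 ≤ α n) (hα : Tendsto α atTop (𝓝 0))
    (hT : Tendsto (partialSum α) atTop atTop) (hx0 : 0 < x) (hx1 : x ≤ 1)
    (hsum : ∀ ε > (0 : ℝ), ∃ n₀ : ℕ, ∀ n ≥ n₀, ∀ y ∈ Set.Icc x 1,
      |partialSum α ⌊y * (n : ℝ)⌋₊ / partialSum α n - 1| ≤ ε)
    (hs : StrictMono s) (hz : 0 < z) (hblock : ∀ m, z ≤ ∑ k ∈ Icc (s m) (s (m + 1)), α k)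
    {u : ℕ → ℕ} (hu_mono : Monotone u) (hu_le : ∀ n, u n ≤ n + 1)
    (hu : ∀ᶠ n in atTop, x * n ≤ u n) :
    (fun M => ∑ m ∈ range M, ∑ k ∈ Icc (u (s m)) (u (s (m + 1))), α k)
      ~[atTop] fun M => partialSum α (s M) := by
  have hmain : (fun M => partialSum α (u (s M))) ~[atTop] fun M => partialSum α (s M) :=
    (isEquivalent_partialSum_comp hα0 hα hT hx1 hsum hu_le hu).comp_tendsto hs.tendsto_atTop
  have hsum_small : (fun M => ∑ m ∈ range M, α (u (s m))) =o[atTop]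
      fun M => partialSum α (s M) :=
    (isLittleO_sum_range_natCast <| hα.comp <|
      (tendsto_atTop_of_eventually_mul_le hx0 hu).comp hs.tendsto_atTop).trans_isBigO
      (natCast_isBigO_partialSum_comp hα0 hα hs hz hblock)
  have hconst_small : (fun _ => partialSum α (u (s 0))) =o[atTop]
      fun M => partialSum α (s M) :=
    isLittleO_const_left.2 <| Or.inr <| tendsto_norm_atTop_atTop.comp <|
      hT.comp hs.tendsto_atTop
  refine (hmain.add_isLittleO (hsum_small.sub hconst_small)).congr_left <|
    Eventually.of_forall fun M => ?_
  dsimp only [Pi.add_apply]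
  rw [sum_range_sum_Icc_eq (p := fun m => u (s m)) (hu_mono.comp hs.monotone)]
  ring

end Windows

theorem eq_one_of_tendsto_div_sum_Icc {α : ℕ → ℝ} {x z ℓ : ℝ} (hαpos : ∀ n, 0 < α n)
    (hα : Tendsto α atTop (𝓝 0)) (hT : Tendsto (partialSum α) atTop atTop)
    (hx0 : 0 < x) (hx1 : x ≤ 1)
    (hsum : ∀ ε > (0 : ℝ), ∃ n₀ : ℕ, ∀ n ≥ n₀, ∀ y ∈ Set.Icc x 1,
      |partialSum α ⌊y * (n : ℝ)⌋₊ / partialSum α n - 1| ≤ ε)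
    (hz : 0 < z) {f : ℕ → ℕ} (hf : ∀ n, n < f n ∧ z ≤ ∑ k ∈ Icc n (f n), α k)
    {u v : ℕ → ℕ} (hu_mono : Monotone u) (hu_le : ∀ n, u n ≤ n + 1)
    (hu : ∀ᶠ n in atTop, x * n ≤ u n) (hv_mono : Monotone v) (hv_le : ∀ n, v n ≤ n + 1)
    (hv : ∀ᶠ n in atTop, x * n ≤ v n)
    (hℓ : Tendsto (fun n => (∑ k ∈ Icc (u n) (u (f n)), α k) / ∑ k ∈ Icc (v n) (v (f n)), α k)
      atTop (𝓝 ℓ)) :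
    ℓ = 1 := by
  have hα0 : ∀ n, 0 ≤ α n := fun n => (hαpos n).le
  set s : ℕ → ℕ := fun m => f^[m] 0
  have hs_succ : ∀ m, s (m + 1) = f (s m) := fun m => Function.iterate_succ_apply' f m 0
  have hs : StrictMono s := strictMono_nat_of_lt_succ fun m => hs_succ m ▸ (hf (s m)).1
  have hblock : ∀ m, z ≤ ∑ k ∈ Icc (s m) (s (m + 1)), α k := fun m => hs_succ m ▸ (hf (s m)).2
  have hSu := isEquivalent_sum_range_sum_Icc hα0 hα hT hx0 hx1 hsum hs hz hblock hu_mono hu_le hu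
  have hSv := isEquivalent_sum_range_sum_Icc hα0 hα hT hx0 hx1 hsum hs hz hblock hv_mono hv_le hv
  have hStolz := tendsto_sum_range_div_sum_range
    (a := fun m => ∑ k ∈ Icc (u (s m)) (u (s (m + 1))), α k)
    (fun m => sum_pos (fun k _ => hαpos k) (nonempty_Icc.2 (hv_mono (hs.monotone m.le_succ))))
    (hSv.symm.tendsto_atTop (hT.comp hs.tendsto_atTop))
    ((hℓ.comp hs.tendsto_atTop).congr fun m => by simp only [Function.comp_apply, hs_succ])
  have hSv_ne := (hSv.symm.tendsto_atTop (hT.comp hs.tendsto_atTop)).eventually_ne_atTop 0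
  exact tendsto_nhds_unique hStolz ((isEquivalent_iff_tendsto_one hSv_ne).1 (hSu.trans hSv.symm))

lemma eventually_mul_le_of_lt_liminf {u : ℕ → ℕ} {x : ℝ}
    (h : x < liminf (fun n => (u n : ℝ) / n) atTop) : ∀ᶠ n in atTop, x * n ≤ u n := by
  filter_upwards [eventually_lt_of_lt_liminf h (isBoundedUnder_of ⟨0, fun n => by positivity⟩),
    eventually_gt_atTop 0] with n hn hn0
  exact ((lt_div_iff₀ (by exact_mod_cast hn0)).1 hn).le

lemma monotone_sum_range_boole (p : ℕ → Prop) [DecidablePred p] :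
    Monotone fun n => ∑ k ∈ range (n + 1), if p k then 1 else 0 :=
  fun _ _ h => sum_le_sum_of_subset (range_subset_range.2 (by omega))

lemma sum_range_boole_le (p : ℕ → Prop) [DecidablePred p] (n : ℕ) :
    ∑ k ∈ range (n + 1), (if p k then 1 else 0) ≤ n + 1 := by
  simpa using card_filter_le (range (n + 1)) p

theorem assumption4ii_limits_equal_one_general
    {d : ℕ}
    {Ω : Type*} [m0 : MeasurableSpace Ω] (μ : Measure Ω)
    (Y : ℕ → Ω → Finset (Fin d))
    (ν : ℕ → Fin d → Ω → ℕ)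
    (hν : ∀ n i ω, ν n i ω = ∑ k ∈ Finset.range (n + 1), if i ∈ Y k ω then 1 else 0)
    (α : ℕ → ℝ) (hαpos : ∀ n, 0 < α n)
    -- Assumption 3(i)
    (hαdiv : ¬ Summable α) (hαsq : Summable fun n => (α n) ^ 2)
    -- Assumption 3(iii)
    (hαsum : ∀ z : ℝ, 0 < z → z < 1 → ∀ ε > (0 : ℝ), ∃ n₀ : ℕ, ∀ n ≥ n₀, ∀ y ∈ Set.Icc z 1,
      |(∑ k ∈ Finset.range (⌊y * (n : ℝ)⌋₊ + 1), α k) / (∑ k ∈ Finset.range (n + 1), α k) - 1| ≤ ε)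
    -- Assumption 4, with N(n,x) := min{m > n : Σ_{k=n}^m α_k ≥ x}
    (N : ℕ → ℝ → ℕ)
    (hN : ∀ n z, N n z = sInf {m | n < m ∧ z ≤ ∑ k ∈ Finset.Icc n m, α k})
    (Δ : ℝ) (hΔ : 0 < Δ)
    (hfreq : ∀ i, ∀ᵐ ω ∂μ, Δ ≤ Filter.liminf (fun n => (ν n i ω : ℝ) / (n : ℝ)) atTop)
    (hratio : ∀ z : ℝ, 0 < z → ∀ i j : Fin d, ∀ᵐ ω ∂μ, ∃ ℓ : ℝ,
      Filter.Tendsto (fun n =>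
        (∑ k ∈ Finset.Icc (ν n i ω) (ν (N n z) i ω), α k) /
        (∑ k ∈ Finset.Icc (ν n j ω) (ν (N n z) j ω), α k)) Filter.atTop (nhds ℓ))
    :
    ∀ z : ℝ, 0 < z → ∀ i j : Fin d, ∀ᵐ ω ∂μ,
      Tendsto (fun n =>
        (∑ k ∈ Finset.Icc (ν n i ω) (ν (N n z) i ω), α k) /
        (∑ k ∈ Finset.Icc (ν n j ω) (ν (N n z) j ω), α k)) atTop (nhds 1) := by
  intro z hz i j
  set x := min (Δ / 2) (1 / 2)
  have hx0 : 0 < x := lt_min (half_pos hΔ) one_half_pos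
  have hx1 : x < 1 := (min_le_right _ _).trans_lt one_half_lt_one
  have hxΔ : x < Δ := (min_le_left _ _).trans_lt (half_lt_self hΔ)
  have hT := tendsto_partialSum_atTop (fun n => (hαpos n).le) hαdiv
  have hα : Tendsto α atTop (𝓝 0) := by
    simpa [Real.sqrt_sq (hαpos _).le] using hαsq.tendsto_atTop_zero.sqrt
  have hwindow : ∀ n, n < N n z ∧ z ≤ ∑ k ∈ Icc n (N n z), α k := fun n =>
    hN n z ▸ lt_and_le_sum_Icc_sInf (fun n => (hαpos n).le) hT n z
  filter_upwards [hratio z hz i j, hfreq i, hfreq j] with ω ⟨ℓ, hℓ⟩ hfi hfj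
  have hcount : ∀ i', Monotone (ν · i' ω) ∧ ∀ n, ν n i' ω ≤ n + 1 := fun i' => by
    simp only [hν]
    exact ⟨monotone_sum_range_boole _, sum_range_boole_le _⟩
  obtain rfl := eq_one_of_tendsto_div_sum_Icc hαpos hα hT hx0 hx1.le (hαsum x hx0 hx1) hz hwindow
    (hcount i).1 (hcount i).2 (eventually_mul_le_of_lt_liminf (hxΔ.trans_le hfi))
    (hcount j).1 (hcount j).2 (eventually_mul_le_of_lt_liminf (hxΔ.trans_le hfj)) hℓ
  exact hℓ

/-- **Remark 2(a).** Under Assumptions 3 and 4, the almost-sure limits in Assumption 4(ii)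
must all equal `1`. -/
theorem assumption4ii_limits_equal_one
    {d : ℕ} (hd : 1 ≤ d)
    {Ω : Type*} [m0 : MeasurableSpace Ω] (μ : Measure Ω) [IsProbabilityMeasure μ]
    (Y : ℕ → Ω → Finset (Fin d)) (hYne : ∀ n ω, (Y n ω).Nonempty)
    (ν : ℕ → Fin d → Ω → ℕ)
    (hν : ∀ n i ω, ν n i ω = ∑ k ∈ Finset.range (n + 1), if i ∈ Y k ω then 1 else 0)
    (α : ℕ → ℝ) (hαpos : ∀ n, 0 < α n)
    -- Assumption 3(i)
    (hαdiv : ¬ Summable α) (hαsq : Summable fun n => (α n) ^ 2)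
    (hαmono : ∃ n₀ : ℕ, ∀ n ≥ n₀, α (n + 1) ≤ α n)
    -- Assumption 3(ii)
    (hαratio : ∀ z : ℝ, 0 < z → z < 1 → ∃ B : ℝ, ∀ n : ℕ, α ⌊z * (n : ℝ)⌋₊ / α n ≤ B)
    -- Assumption 3(iii)
    (hαsum : ∀ z : ℝ, 0 < z → z < 1 → ∀ ε > (0 : ℝ), ∃ n₀ : ℕ, ∀ n ≥ n₀, ∀ y ∈ Set.Icc z 1,
      |(∑ k ∈ Finset.range (⌊y * (n : ℝ)⌋₊ + 1), α k) / (∑ k ∈ Finset.range (n + 1), α k) - 1| ≤ ε)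
    -- Assumption 4, with N(n,x) := min{m > n : Σ_{k=n}^m α_k ≥ x}
    (N : ℕ → ℝ → ℕ)
    (hN : ∀ n z, N n z = sInf {m | n < m ∧ z ≤ ∑ k ∈ Finset.Icc n m, α k})
    (Δ : ℝ) (hΔ : 0 < Δ)
    (hfreq : ∀ i, ∀ᵐ ω ∂μ, Δ ≤ Filter.liminf (fun n => (ν n i ω : ℝ) / (n : ℝ)) atTop)
    (hratio : ∀ z : ℝ, 0 < z → ∀ i j : Fin d, ∀ᵐ ω ∂μ, ∃ ℓ : ℝ,
      Filter.Tendsto (fun n =>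
        (∑ k ∈ Finset.Icc (ν n i ω) (ν (N n z) i ω), α k) /
        (∑ k ∈ Finset.Icc (ν n j ω) (ν (N n z) j ω), α k)) Filter.atTop (nhds ℓ))
    :
    ∀ z : ℝ, 0 < z → ∀ i j : Fin d, ∀ᵐ ω ∂μ,
      Tendsto (fun n =>
        (∑ k ∈ Finset.Icc (ν n i ω) (ν (N n z) i ω), α k) /
        (∑ k ∈ Finset.Icc (ν n j ω) (ν (N n z) j ω), α k)) atTop (nhds 1) :=
  assumption4ii_limits_equal_one_general (m0 := m0) μ Y ν hν α hαpos hαdiv hαsq hαsum N hN Δ hΔ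
    hfreq hratio
end

section
/- There exists T > 0, depending only on h_∞, d, and C (in particular, not on the choice of ρ), such that for every Borel-measurable function ρ : [0,∞) → [1/d, C] and every locally absolutely continuous φ : [0,∞) → ℝ^d with ‖φ(0)‖ = 1 and φ'(t) = ρ(t) h_∞(φ(t)) for almost every t ≥ 0, one has ‖φ(t)‖ < 1/8 for all t ≥ T. -/
/-!
With `τ t = ∫₀ᵗ ρ` and `ψ` the solution of `ẋ = h_∞(x)` through `φ 0`, the curve `ψ ∘ τ` solves
the same integral equation as `φ`, so `φ = ψ ∘ τ` by Grönwall; since `τ t ≥ t / d`, it suffices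
that the unscaled solutions starting on the unit sphere enter the ball of radius `1/16` after a
common time. Fix `y` and let `δ` be the stability radius for `1/16`: attractivity gives a time
`t_y` at which the solution through `y` is `δ/2`-close to `0`; by Grönwall every solution
starting close enough to `y` is `δ`-close to `0` at `t_y`, and then stays in the small ball by
stability. Compactness of the sphere makes the time uniform. Global solutions of the unscaled
equation exist since the Picard–Lindelöf step only depends on the Lipschitz constant.
-/

open MeasureTheory Filter intervalIntegral
open Set Metric Topology

variable {E : Type*} [NormedAddCommGroup E] [NormedSpace ℝ E] {f : E → E} {L : NNReal}

theorem LipschitzWith.eqOn_of_hasDerivAt_Ioo (hf : LipschitzWith L f) {α β : ℝ → E} {a b t₀ : ℝ}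
    (ht₀ : t₀ ∈ Ioo a b) (hα : ∀ t ∈ Ioo a b, HasDerivAt α (f (α t)) t)
    (hβ : ∀ t ∈ Ioo a b, HasDerivAt β (f (β t)) t) (h : α t₀ = β t₀) :
    EqOn α β (Ioo a b) :=
  ODE_solution_unique_of_mem_Ioo (v := fun _ => f) (s := fun _ => univ)
    (fun _ _ => hf.lipschitzOnWith) ht₀ (fun t ht => ⟨hα t ht, trivial⟩)
    (fun t ht => ⟨hβ t ht, trivial⟩) h

theorem LipschitzWith.exists_hasDerivAt_union (hf : LipschitzWith L f) {α β : ℝ → E}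
    {a b c e t₀ : ℝ} (hα : ∀ t ∈ Ioo a b, HasDerivAt α (f (α t)) t)
    (hβ : ∀ t ∈ Ioo c e, HasDerivAt β (f (β t)) t)
    (ht₀ : t₀ ∈ Ioo a b ∩ Ioo c e) (h : α t₀ = β t₀) :
    ∃ γ : ℝ → E, EqOn γ α (Ioo a b) ∧ EqOn γ β (Ioo c e) ∧
      ∀ t ∈ Ioo (min a c) (max b e), HasDerivAt γ (f (γ t)) t := by
  classical
  have hαβ : EqOn α β (Ioo a b ∩ Ioo c e) := by
    rw [Ioo_inter_Ioo] at ht₀ ⊢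
    exact hf.eqOn_of_hasDerivAt_Ioo ht₀
      (fun t ht => hα t (Ioo_subset_Ioo (le_max_left _ _) (min_le_left _ _) ht))
      (fun t ht => hβ t (Ioo_subset_Ioo (le_max_right _ _) (min_le_right _ _) ht)) h
  set γ := (Ioo a b).piecewise α β
  have hγα : EqOn γ α (Ioo a b) := fun t ht => piecewise_eq_of_mem _ _ _ ht
  have hγβ : EqOn γ β (Ioo c e) := fun t ht => by
    by_cases hab : t ∈ Ioo a b
    · rw [hγα hab, hαβ ⟨hab, ht⟩]
    · exact piecewise_eq_of_notMem _ _ _ hab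
  refine ⟨γ, hγα, hγβ, fun t ht => ?_⟩
  rw [← Ioo_union_Ioo' (ht₀.2.1.trans ht₀.1.2) (ht₀.1.1.trans ht₀.2.2)] at ht
  rcases ht with ht | ht
  · rw [hγα ht]
    exact (hα t ht).congr_of_eventuallyEq
      (eventuallyEq_of_mem (isOpen_Ioo.mem_nhds ht) hγα)
  · rw [hγβ ht]
    exact (hβ t ht).congr_of_eventuallyEq
      (eventuallyEq_of_mem (isOpen_Ioo.mem_nhds ht) hγβ)

variable (f) in
def HasSolutionsOnIoo (r : ℝ) : Prop :=
  ∀ x₀ : E, ∃ γ : ℝ → E, γ 0 = x₀ ∧ ∀ t ∈ Ioo (-r) r, HasDerivAt γ (f (γ t)) t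

theorem LipschitzWith.hasSolutionsOnIoo [CompleteSpace E] (hf : LipschitzWith L f) :
    HasSolutionsOnIoo f (2 * ((L : ℝ) + 1))⁻¹ := by
  intro x₀
  set r : ℝ := (2 * ((L : ℝ) + 1))⁻¹
  set a : NNReal := ⟨‖f x₀‖ + 1, by positivity⟩
  have hbound : ∀ x ∈ closedBall x₀ a, ‖f x‖ ≤ (L + 1) * a := fun x hx => calc
    ‖f x‖ ≤ ‖f x - f x₀‖ + ‖f x₀‖ := norm_le_norm_sub_add _ _
    _ ≤ L * a + a := by
      gcongr
      · exact (hf.norm_sub_le x x₀).trans (by gcongr; exact mem_closedBall_iff_norm.mp hx)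
      · exact (lt_add_one _).le
    _ = (L + 1) * a := by ring
  have hpl : IsPicardLindelof (fun _ => f) (tmin := -r) (tmax := r) ⟨0, by simp [r]; positivity⟩
      x₀ a 0 ((L + 1) * a) L := by
    refine IsPicardLindelof.of_time_independent hbound hf.lipschitzOnWith ?_
    have : ((L : ℝ) + 1) * a * r = a / 2 := by simp only [r]; field_simp
    simp only [NNReal.coe_mul, NNReal.coe_add, NNReal.coe_one, sub_zero, zero_sub, neg_neg,
      max_self, NNReal.coe_zero]
    linarith [a.2]
  obtain ⟨γ, hγ0, hγ⟩ := hpl.exists_eq_forall_mem_Icc_hasDerivWithinAt₀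
  exact ⟨γ, hγ0, fun t ht => (hγ t (Ioo_subset_Icc_self ht)).hasDerivAt (Icc_mem_nhds ht.1 ht.2)⟩

theorem HasSolutionsOnIoo.three_halves_mul (hf : LipschitzWith L f) {r : ℝ} (hr : 0 < r)
    (h : HasSolutionsOnIoo f r) : HasSolutionsOnIoo f (3 / 2 * r) := by
  have centered : ∀ c y, ∃ β : ℝ → E, β c = y ∧
      ∀ t ∈ Ioo (c - r) (c + r), HasDerivAt β (f (β t)) t := fun c y => by
    obtain ⟨σ, hσ0, hσ⟩ := h y
    refine ⟨fun t => σ (t - c), by simpa using hσ0, fun t ht => ?_⟩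
    exact (hσ (t - c) ⟨by linarith [ht.1], by linarith [ht.2]⟩).comp_sub_const t c
  intro x₀
  obtain ⟨γ, hγ0, hγ⟩ := h x₀
  -- glue to `γ` the solutions through `γ (r / 2)` and through `γ (-(r / 2))`, recentred there
  obtain ⟨βr, hβr0, hβr⟩ := centered (r / 2) (γ (r / 2))
  obtain ⟨γ₁, hγ₁γ, -, hγ₁⟩ := hf.exists_hasDerivAt_union hγ hβr (t₀ := r / 2)
    ⟨⟨by linarith, by linarith⟩, ⟨by linarith, by linarith⟩⟩ hβr0.symm
  rw [min_eq_left (by linarith), max_eq_right (by linarith)] at hγ₁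
  obtain ⟨βl, hβl0, hβl⟩ := centered (-(r / 2)) (γ₁ (-(r / 2)))
  obtain ⟨γ₂, -, hγ₂γ₁, hγ₂⟩ := hf.exists_hasDerivAt_union hβl hγ₁ (t₀ := -(r / 2))
    ⟨⟨by linarith, by linarith⟩, ⟨by linarith, by linarith⟩⟩ hβl0
  rw [min_eq_left (by linarith), max_eq_right (by linarith)] at hγ₂
  refine ⟨γ₂, ?_, fun t ht => hγ₂ t ⟨by linarith [ht.1], by linarith [ht.2]⟩⟩
  rw [hγ₂γ₁ ⟨by linarith, by linarith⟩, hγ₁γ ⟨by linarith, hr⟩, hγ0]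

theorem LipschitzWith.exists_isIntegralCurve [CompleteSpace E] (hf : LipschitzWith L f)
    (x₀ : E) :
    ∃ γ : ℝ → E, γ 0 = x₀ ∧ IsIntegralCurve γ (fun _ => f) := by
  have hr₀ : 0 < (2 * ((L : ℝ) + 1))⁻¹ := by positivity
  have hpow : ∀ n : ℕ, HasSolutionsOnIoo f ((3 / 2) ^ n * (2 * ((L : ℝ) + 1))⁻¹) := by
    intro n
    induction n with
    | zero => simpa using hf.hasSolutionsOnIoo
    | succ n ih =>
      rw [pow_succ, mul_comm _ (3 / 2 : ℝ), mul_assoc]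
      exact ih.three_halves_mul hf (by positivity)
  have hall : ∀ R, ∃ γ : ℝ → E, γ 0 = x₀ ∧ ∀ t ∈ Ioo (-R) R, HasDerivAt γ (f (γ t)) t := by
    intro R
    obtain ⟨n, hn⟩ :=
      pow_unbounded_of_one_lt (R / (2 * ((L : ℝ) + 1))⁻¹) (by norm_num : (1 : ℝ) < 3 / 2)
    obtain ⟨γ, hγ0, hγ⟩ := hpow n x₀
    have hR := ((div_lt_iff₀ hr₀).mp hn).le
    exact ⟨γ, hγ0, fun t ht => hγ t (Ioo_subset_Ioo (neg_le_neg hR) hR ht)⟩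
  choose Γ hΓ0 hΓ using hall
  have hΓΓ : ∀ R R' s, |s| < min R R' → Γ R s = Γ R' s := fun R R' s hs => by
    have hsub : ∀ R'', min R R' ≤ R'' → Ioo (-min R R') (min R R') ⊆ Ioo (-R'') R'' :=
      fun R'' h => Ioo_subset_Ioo (neg_le_neg h) h
    refine hf.eqOn_of_hasDerivAt_Ioo (t₀ := 0) ⟨?_, ?_⟩
      (fun t ht => hΓ R t (hsub R (min_le_left _ _) ht))
      (fun t ht => hΓ R' t (hsub R' (min_le_right _ _) ht))
      ((hΓ0 R).trans (hΓ0 R').symm) (abs_lt.mp hs)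
    all_goals linarith [abs_nonneg s]
  refine ⟨fun t => Γ (|t| + 1) t, hΓ0 _, fun t => ?_⟩
  have hloc : EqOn (fun s => Γ (|s| + 1) s) (Γ (|t| + 1)) (Ioo (-(|t| + 1)) (|t| + 1)) :=
    fun s hs => hΓΓ _ _ s (lt_min (lt_add_one _) (abs_lt.mpr hs))
  have ht : t ∈ Ioo (-(|t| + 1)) (|t| + 1) := abs_lt.mp (lt_add_one _)
  exact (hΓ _ t ht).congr_of_eventuallyEq (eventuallyEq_of_mem (isOpen_Ioo.mem_nhds ht) hloc)

theorem LipschitzWith.eventually_prod_nhds_forall_norm_le [CompleteSpace E]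
    (hf : LipschitzWith L f)
    (hstab : ∀ ε > (0 : ℝ), ∃ δ > (0 : ℝ), ∀ φ : ℝ → E,
      IsIntegralCurve φ (fun _ => f) → ‖φ 0‖ ≤ δ → ∀ t ≥ (0 : ℝ), ‖φ t‖ ≤ ε)
    (hattr : ∀ φ : ℝ → E, IsIntegralCurve φ (fun _ => f) → Tendsto φ atTop (𝓝 0))
    {ε : ℝ} (hε : 0 < ε) (y : E) :
    ∀ᶠ p in atTop ×ˢ 𝓝 y, ∀ ψ : ℝ → E, IsIntegralCurve ψ (fun _ => f) → ψ 0 = p.2 →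
      ∀ t ≥ p.1, ‖ψ t‖ ≤ ε := by
  obtain ⟨δ, hδ, hδε⟩ := hstab ε hε
  obtain ⟨χ, hχ0, hχ⟩ := hf.exists_isIntegralCurve y
  have hχδ : ∀ᶠ t in atTop, ‖χ t‖ < δ / 2 :=
    (hattr χ hχ).norm.eventually_lt_const (by simpa using hδ)
  obtain ⟨t₁, hχt₁, ht₁⟩ := (hχδ.and (eventually_ge_atTop 0)).exists
  refine ((eventually_ge_atTop t₁).prod_mk
    (ball_mem_nhds y (by positivity : 0 < δ / 2 * Real.exp (-(L * t₁))))).mono ?_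
  rintro ⟨T, x⟩ ⟨hT, hx⟩ ψ hψ hψ0 t ht
  have hdist : dist (ψ t₁) (χ t₁) ≤ δ / 2 := by
    have := dist_le_of_trajectories_ODE (v := fun _ => f) (K := L)
      (δ := δ / 2 * Real.exp (-(L * t₁))) (fun _ => hf)
      hψ.continuous.continuousOn (fun t _ => (hψ t).hasDerivWithinAt)
      hχ.continuous.continuousOn (fun t _ => (hχ t).hasDerivWithinAt)
      (by rw [hψ0, hχ0]; exact (mem_ball.mp hx).le) t₁ ⟨ht₁, le_rfl⟩
    rwa [sub_zero, mul_assoc, ← Real.exp_add, neg_add_cancel, Real.exp_zero, mul_one] at this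
  have hψt₁ : ‖ψ t₁‖ ≤ δ := by
    linarith [norm_le_norm_sub_add (ψ t₁) (χ t₁), dist_eq_norm (ψ t₁) (χ t₁)]
  simpa using hδε (ψ ∘ (· + t₁)) (hψ.comp_add t₁) (by simpa using hψt₁) (t - t₁)
    (by linarith [hT.trans ht])

theorem LipschitzWith.eventually_forall_norm_le [CompleteSpace E] (hf : LipschitzWith L f)
    (hstab : ∀ ε > (0 : ℝ), ∃ δ > (0 : ℝ), ∀ φ : ℝ → E,
      IsIntegralCurve φ (fun _ => f) → ‖φ 0‖ ≤ δ → ∀ t ≥ (0 : ℝ), ‖φ t‖ ≤ ε)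
    (hattr : ∀ φ : ℝ → E, IsIntegralCurve φ (fun _ => f) → Tendsto φ atTop (𝓝 0))
    {K : Set E} (hK : IsCompact K) {ε : ℝ} (hε : 0 < ε) :
    ∀ᶠ T in atTop, ∀ ψ : ℝ → E, IsIntegralCurve ψ (fun _ => f) → ψ 0 ∈ K →
      ∀ t ≥ T, ‖ψ t‖ ≤ ε := by
  have : ∀ᶠ p in atTop ×ˢ 𝓝ˢ K, ∀ ψ : ℝ → E, IsIntegralCurve ψ (fun _ => f) → ψ 0 = p.2 →
      ∀ t ≥ p.1, ‖ψ t‖ ≤ ε :=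
    hK.mem_prod_nhdsSet_of_forall fun y _ =>
      hf.eventually_prod_nhds_forall_norm_le hstab hattr hε y
  exact this.curry.mono fun _ hT ψ hψ hψK => hT.self_of_nhdsSet (ψ 0) hψK ψ hψ rfl

theorem IntervalIntegrable.lipschitzOnWith_primitive {g : ℝ → E} {a b M : ℝ}
    (hg : IntervalIntegrable g volume a b) (hM : ∀ s ∈ uIcc a b, ‖g s‖ ≤ M) :
    LipschitzOnWith (Real.toNNReal M) (fun x => ∫ s in a..x, g s) (uIcc a b) := by
  refine LipschitzOnWith.of_dist_le_mul fun x hx y hy => ?_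
  rw [dist_eq_norm, integral_interval_sub_left (hg.mono_set (uIcc_subset_uIcc left_mem_uIcc hx))
    (hg.mono_set (uIcc_subset_uIcc left_mem_uIcc hy)), Real.dist_eq]
  exact (norm_integral_le_of_norm_le_const fun s hs =>
    hM s (uIcc_subset_uIcc hy hx (uIoc_subset_uIcc hs))).trans
    (mul_le_mul_of_nonneg_right (Real.le_coe_toNNReal M) (abs_nonneg _))

theorem IsIntegralCurve.locallyLipschitz {ψ : ℝ → E} (hψ : IsIntegralCurve ψ (fun _ => f))
    (hf : Continuous f) : LocallyLipschitz ψ := by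
  refine ContDiff.locallyLipschitz
    (contDiff_one_iff_deriv.mpr ⟨fun t => (hψ t).differentiableAt, ?_⟩)
  rw [show deriv ψ = f ∘ ψ from funext fun t => (hψ t).deriv]
  exact hf.comp hψ.continuous

theorem IsIntegralCurve.comp_integral_eq [CompleteSpace E] {ψ : ℝ → E}
    (hψ : IsIntegralCurve ψ (fun _ => f)) (hf : Continuous f) {ρ : ℝ → ℝ} {b M : ℝ}
    (hρ : IntervalIntegrable ρ volume 0 b)
    (hM : ∀ s ∈ uIcc 0 b, |ρ s| ≤ M) :
    ψ (∫ s in 0..b, ρ s) = ψ 0 + ∫ s in 0..b, ρ s • f (ψ (∫ u in 0..s, ρ u)) := by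
  set τ := fun x => ∫ s in 0..x, ρ s
  have hτ := hρ.lipschitzOnWith_primitive (M := M) hM
  obtain ⟨K, hψK⟩ := hψ.locallyLipschitz hf |>.locallyLipschitzOn
    |>.exists_lipschitzOnWith_of_compact (isCompact_uIcc.image_of_continuousOn hτ.continuousOn)
  have hfψτ : ContinuousOn (fun s => f (ψ (τ s))) (uIcc 0 b) :=
    hf.comp_continuousOn (hψ.continuous.comp_continuousOn hτ.continuousOn)
  obtain ⟨B, hB⟩ := isCompact_uIcc.exists_bound_of_continuousOn hfψτ
  set g := fun s => ρ s • f (ψ (τ s))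
  have hg : IntervalIntegrable g volume 0 b := hρ.smul_continuousOn hfψτ
  have hI := hg.lipschitzOnWith_primitive (M := M * B) fun s hs => by
    rw [norm_smul, Real.norm_eq_abs]
    exact mul_le_mul (hM s hs) (hB s hs) (norm_nonneg _) ((abs_nonneg _).trans (hM s hs))
  -- `G` is Lipschitz, hence absolutely continuous, and `G' = 0` at a.e. Lebesgue point of `ρ`
  set G := fun x => ψ (τ x) - ∫ s in 0..x, g s
  have hG : AbsolutelyContinuousOnInterval G 0 b :=
    (hψK.comp hτ (mapsTo_image _ _)).absolutelyContinuousOnInterval.sub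
      hI.absolutelyContinuousOnInterval
  have hG' : ∀ᵐ x, x ∈ uIcc 0 b → HasDerivAt G 0 x := by
    filter_upwards [hρ.ae_hasDerivAt_integral, hg.ae_hasDerivAt_integral] with x hτx hIx hx
    exact (((hψ (τ x)).scomp x (hτx hx 0 left_mem_uIcc)).sub (hIx hx 0 left_mem_uIcc)).congr_deriv
      (sub_self _)
  obtain ⟨c, hc⟩ := hG.const_of_ae_hasDerivAt_zero hG'
  have := (hc b right_mem_uIcc).trans (hc 0 left_mem_uIcc).symm
  simp only [G, τ, integral_same, sub_zero] at this
  rw [← this, sub_add_cancel]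

theorem eqOn_zero_of_le_mul_integral {u : ℝ → ℝ} {K a b : ℝ} (hK : 0 ≤ K)
    (hu : ContinuousOn u (Icc a b)) (hu0 : ∀ t ∈ Icc a b, 0 ≤ u t)
    (h : ∀ t ∈ Icc a b, u t ≤ K * ∫ s in a..t, u s) : EqOn u 0 (Icc a b) := by
  intro t ht
  have hab : a ≤ b := ht.1.trans ht.2
  have hui : IntervalIntegrable u volume a b := hu.intervalIntegrable_of_Icc hab
  have hW : ContinuousOn (fun x => ∫ s in a..x, u s) (Icc a b) := by
    simpa [uIcc_of_le hab] using continuousOn_primitive_interval' hui left_mem_uIcc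
  have hW' : ∀ x ∈ Ico a b, HasDerivWithinAt (fun x => ∫ s in a..x, u s) (u x) (Ici x) x :=
    fun x hx => integral_hasDerivWithinAt_right
      (hui.mono_set (uIcc_subset_uIcc left_mem_uIcc (Icc_subset_uIcc (Ico_subset_Icc_self hx))))
      ((hu.stronglyMeasurableAtFilter_nhdsWithin measurableSet_Icc x).filter_mono
        (nhdsWithin_le_of_mem (Icc_mem_nhdsGT_of_mem hx)))
      ((hu x (Ico_subset_Icc_self hx)).mono_of_mem_nhdsWithin (Icc_mem_nhdsGT_of_mem hx))
  -- Grönwall for `W = ∫ₐ u`: `W' = u ≤ K W` and `W a = 0`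
  have hW0 := eq_zero_of_abs_deriv_le_mul_abs_self_of_eq_zero_right hW hW' integral_same
    (fun x hx => by
      rw [Real.norm_of_nonneg (hu0 x (Ico_subset_Icc_self hx)), Real.norm_eq_abs]
      exact (h x (Ico_subset_Icc_self hx)).trans (mul_le_mul_of_nonneg_left (le_abs_self _) hK))
  exact le_antisymm (by simpa [hW0 t ht] using h t ht) (hu0 t ht)

theorem LipschitzWith.eqOn_of_eq_add_integral_smul (hf : LipschitzWith L f) {ρ : ℝ → ℝ}
    {φ χ : ℝ → E} {x₀ : E} {b M : ℝ} (hρ : IntervalIntegrable ρ volume 0 b)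
    (hM : ∀ s ∈ Icc 0 b, |ρ s| ≤ M) (hφ : ContinuousOn φ (Icc 0 b))
    (hχ : ContinuousOn χ (Icc 0 b))
    (hφeq : ∀ t ∈ Icc 0 b, φ t = x₀ + ∫ s in 0..t, ρ s • f (φ s))
    (hχeq : ∀ t ∈ Icc 0 b, χ t = x₀ + ∫ s in 0..t, ρ s • f (χ s)) :
    EqOn φ χ (Icc 0 b) := by
  intro t ht
  have hML : 0 ≤ M * L := mul_nonneg ((abs_nonneg _).trans (hM t ht)) L.2
  have hint : ∀ t ∈ Icc 0 b, ∀ ψ : ℝ → E, ContinuousOn ψ (Icc 0 b) →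
      IntervalIntegrable (fun s => ρ s • f (ψ s)) volume 0 t := fun t ht ψ hψ =>
    (hρ.mono_set (uIcc_subset_uIcc left_mem_uIcc (Icc_subset_uIcc ht))).smul_continuousOn
      ((hf.continuous.comp_continuousOn hψ).mono
        (by simpa [uIcc_of_le ht.1] using Icc_subset_Icc_right ht.2))
  refine sub_eq_zero.mp (norm_eq_zero.mp (eqOn_zero_of_le_mul_integral
    (u := fun t => ‖φ t - χ t‖) hML (hφ.sub hχ).norm (fun _ _ => norm_nonneg _)
    (fun t ht => ?_) ht))
  rw [hφeq t ht, hχeq t ht, add_sub_add_left_eq_sub, ← integral_sub (hint t ht φ hφ)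
    (hint t ht χ hχ), ← intervalIntegral.integral_const_mul]
  refine norm_integral_le_of_norm_le ht.1 (ae_of_all _ fun s hs => ?_) ?_
  · rw [← smul_sub, norm_smul, Real.norm_eq_abs, mul_assoc]
    exact mul_le_mul (hM s ⟨hs.1.le, hs.2.trans ht.2⟩) (hf.norm_sub_le _ _) (norm_nonneg _)
      ((abs_nonneg _).trans (hM s ⟨hs.1.le, hs.2.trans ht.2⟩))
  · exact (((hφ.sub hχ).norm.mono (Icc_subset_Icc_right ht.2)).intervalIntegrable_of_Icc
      ht.1).const_mul _

theorem LipschitzWith.eqOn_comp_integral [CompleteSpace E] (hf : LipschitzWith L f)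
    {ρ : ℝ → ℝ} {b M : ℝ} (hρ : IntervalIntegrable ρ volume 0 b) (hM : ∀ s ∈ Icc 0 b, |ρ s| ≤ M)
    {φ ψ : ℝ → E} (hφ : ContinuousOn φ (Icc 0 b))
    (hφeq : ∀ t ∈ Icc 0 b, φ t = φ 0 + ∫ s in 0..t, ρ s • f (φ s))
    (hψ : IsIntegralCurve ψ (fun _ => f)) (hψ0 : ψ 0 = φ 0) :
    EqOn φ (fun t => ψ (∫ s in 0..t, ρ s)) (Icc 0 b) := by
  have hτ : ContinuousOn (fun t => ∫ s in 0..t, ρ s) (Icc 0 b) :=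
    (continuousOn_primitive_interval' hρ left_mem_uIcc).mono Icc_subset_uIcc
  refine hf.eqOn_of_eq_add_integral_smul hρ hM hφ (hψ.continuous.comp_continuousOn hτ) hφeq
    fun t ht => ?_
  rw [← hψ0]
  exact hψ.comp_integral_eq hf.continuous
    (hρ.mono_set (uIcc_subset_uIcc left_mem_uIcc (Icc_subset_uIcc ht)))
    fun s hs => hM s (Icc_subset_Icc_right ht.2 (by rwa [uIcc_of_le ht.1] at hs))

theorem time_rescaled_ode_stability_general
    {d : ℕ} (hd : 1 ≤ d) (C : ℝ)
    (hinf : (Fin d → ℝ) → (Fin d → ℝ))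
    (L : NNReal) (hLip : LipschitzWith L hinf)
    -- Lyapunov stability of the origin
    (hstab : ∀ ε > (0 : ℝ), ∃ δ > (0 : ℝ), ∀ φ : ℝ → (Fin d → ℝ),
      (∀ t, HasDerivAt φ (hinf (φ t)) t) → ‖φ 0‖ ≤ δ → ∀ t ≥ (0 : ℝ), ‖φ t‖ ≤ ε)
    -- global attractivity of the origin
    (hattr : ∀ φ : ℝ → (Fin d → ℝ),
      (∀ t, HasDerivAt φ (hinf (φ t)) t) → Tendsto φ atTop (nhds 0)) :
    ∃ T : ℝ, 0 < T ∧ ∀ ρ : ℝ → ℝ, Measurable ρ →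
      (∀ t ≥ (0 : ℝ), (d : ℝ)⁻¹ ≤ ρ t ∧ ρ t ≤ C) →
      ∀ φ : ℝ → (Fin d → ℝ), ContinuousOn φ (Set.Ici 0) → ‖φ 0‖ = 1 →
        (∀ t ≥ (0 : ℝ), φ t = φ 0 + ∫ s in (0 : ℝ)..t, ρ s • hinf (φ s)) →
        ∀ t ≥ T, ‖φ t‖ < 1 / 8 := by
  obtain ⟨T₀, hT₀, hT₀pos⟩ := ((hLip.eventually_forall_norm_le hstab hattr
    (isCompact_sphere 0 1) (by norm_num : (0 : ℝ) < 1 / 16)).and (eventually_gt_atTop 0)).exists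
  have hd₀ : (0 : ℝ) < d := by exact_mod_cast hd
  refine ⟨d * T₀, by positivity, fun ρ hρm hρ φ hφc hφ0 hφeq t ht => ?_⟩
  have ht₀ : 0 ≤ t := le_trans (by positivity) ht
  have hρC : ∀ s ∈ Icc 0 t, |ρ s| ≤ C := fun s hs => by
    rw [abs_of_nonneg ((inv_nonneg.mpr hd₀.le).trans (hρ s hs.1).1)]
    exact (hρ s hs.1).2
  have hρi : IntervalIntegrable ρ volume 0 t :=
    intervalIntegrable_const.mono_fun' hρm.aestronglyMeasurable
      ((ae_restrict_iff' measurableSet_uIoc).mpr (ae_of_all _ fun s hs => by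
        rw [uIoc_of_le ht₀] at hs
        exact (Real.norm_eq_abs _).le.trans (hρC s (Ioc_subset_Icc_self hs))))
  obtain ⟨ψ, hψ0, hψ⟩ := hLip.exists_isIntegralCurve (φ 0)
  have hφψ := hLip.eqOn_comp_integral hρi hρC (hφc.mono Icc_subset_Ici_self)
    (fun s hs => hφeq s hs.1) hψ hψ0
  have hτ : T₀ ≤ ∫ s in 0..t, ρ s := calc
    T₀ ≤ (t - 0) * (d : ℝ)⁻¹ := by rw [sub_zero, ← div_eq_mul_inv, le_div_iff₀ hd₀]; linarith
    _ = ∫ _ in 0..t, (d : ℝ)⁻¹ := by rw [intervalIntegral.integral_const, smul_eq_mul]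
    _ ≤ ∫ s in 0..t, ρ s :=
      integral_mono_on ht₀ intervalIntegrable_const hρi fun s hs => (hρ s hs.1).1
  rw [hφψ ⟨ht₀, le_rfl⟩]
  exact (hT₀ ψ hψ (by simpa [hψ0] using hφ0) _ hτ).trans_lt (by norm_num)

/-- **Lemma 5.** If the origin is the unique globally asymptotically stable equilibrium of
`ẋ = h_∞(x)` (`h_∞` Lipschitz, `h_∞(0) = 0`), then there is `T > 0`, depending only on
`h_∞`, `d`, `C`, such that every (Carathéodory) solution of `ẋ(t) = ρ(t) h_∞(x(t))` with
measurable `ρ : [0,∞) → [1/d, C]` and `‖x(0)‖ = 1` satisfies `‖x(t)‖ < 1/8` for `t ≥ T`. -/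
theorem time_rescaled_ode_stability
    {d : ℕ} (hd : 1 ≤ d) (C : ℝ) (hC : (d : ℝ)⁻¹ ≤ C)
    (hinf : (Fin d → ℝ) → (Fin d → ℝ))
    (L : NNReal) (hLip : LipschitzWith L hinf) (hinf0 : hinf 0 = 0)
    -- Lyapunov stability of the origin
    (hstab : ∀ ε > (0 : ℝ), ∃ δ > (0 : ℝ), ∀ φ : ℝ → (Fin d → ℝ),
      (∀ t, HasDerivAt φ (hinf (φ t)) t) → ‖φ 0‖ ≤ δ → ∀ t ≥ (0 : ℝ), ‖φ t‖ ≤ ε)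
    -- global attractivity of the origin
    (hattr : ∀ φ : ℝ → (Fin d → ℝ),
      (∀ t, HasDerivAt φ (hinf (φ t)) t) → Tendsto φ atTop (nhds 0)) :
    ∃ T : ℝ, 0 < T ∧ ∀ ρ : ℝ → ℝ, Measurable ρ →
      (∀ t ≥ (0 : ℝ), (d : ℝ)⁻¹ ≤ ρ t ∧ ρ t ≤ C) →
      ∀ φ : ℝ → (Fin d → ℝ), ContinuousOn φ (Set.Ici 0) → ‖φ 0‖ = 1 →
        (∀ t ≥ (0 : ℝ), φ t = φ 0 + ∫ s in (0 : ℝ)..t, ρ s • hinf (φ s)) →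
        ∀ t ≥ T, ‖φ t‖ < 1 / 8 :=
  time_rescaled_ode_stability_general hd C hinf L hLip hstab hattr
end

section
/- Let h : ℝ^d → ℝ^d be Lipschitz with modulus L, let h_c(x) := h(cx)/c for c ≥ 1, and let h_∞ : ℝ^d → ℝ^d be Lipschitz with modulus L and h_∞(0) = 0. Fix T > 0, C̄ > 0, set B := e^{C̄ L T} and ε(c) := C̄ · sup_{‖y‖ ≤ B} ‖h_c(y) − h_∞(y)‖. Let λ*, λ' : [0,T] → ℝ^{d×d} be measurable matrix-valued functions with ‖λ*(s)‖ ≤ C̄ and ‖λ'(s)‖ ≤ C̄ for all s. Let x ∈ ℝ^d with ‖x‖ = 1, let φ_∞ : [0,T] → ℝ^d be absolutely continuous with φ_∞(0) = x and φ_∞'(t) = λ*(t) h_∞(φ_∞(t)) a.e., and let φ : [0,T] → ℝ^d be absolutely continuous with φ(0) = x and φ'(t) = λ'(t) h_c(φ(t)) a.e. If, for some ε̄ > 0, ‖∫_0^t (λ'(s) − λ*(s)) h_∞(φ_∞(s)) ds‖ ≤ ε̄ for all t ∈ [0,T], then ‖φ(t) − φ_∞(t)‖ ≤ (ε̄ +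 ε(c) T) e^{C̄ L T} for all t ∈ [0,T]. -/
/-!
Everything rests on Grönwall's inequality in integral form. Since `h_∞ 0 = 0`, the field
`λ*(s) h_∞(y)` grows at most like `C̄ L ‖y‖`, so `‖φ_∞‖ ≤ e^{C̄ L T} = B` on `[0, T]`: the
solution `φ_∞` stays in the ball on which `ε(c)` measures the distance between `h_c` and `h_∞`.
Next, in
`φ - φ_∞ = ∫ λ' (h_c φ - h_c φ_∞) + ∫ λ' (h_c φ_∞ - h_∞ φ_∞) + ∫ (λ' - λ*) h_∞ φ_∞`
the first term is at most `C̄ L ∫ ‖φ - φ_∞‖` because rescaling `h ↦ h_c` preserves the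
Lipschitz constant, the second at most `ε(c) T`, and the third at most `ε̄`; Grönwall applied
to `‖φ - φ_∞‖` concludes.
-/

open MeasureTheory Filter intervalIntegral Set Real Topology

theorem le_mul_exp_of_le_add_mul_integral {ψ : ℝ → ℝ} {a b A K : ℝ} (hK : 0 ≤ K)
    (hψ : ContinuousOn ψ (Icc a b)) (h : ∀ t ∈ Icc a b, ψ t ≤ A + K * ∫ s in a..t, ψ s) :
    ∀ t ∈ Icc a b, ψ t ≤ A * exp (K * (t - a)) := by
  -- `F` majorizes `ψ` and `F' = K ψ ≤ K F`, so the differential Grönwall inequality bounds `F`.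
  set F : ℝ → ℝ := fun t => A + K * ∫ s in a..t, ψ s
  have hF : ContinuousOn F (Icc a b) := by
    rcases le_or_gt a b with hab | hab
    · have := continuousOn_primitive_interval (μ := volume)
        (hψ.integrableOn_Icc.mono_set (uIcc_of_le hab).subset)
      rw [uIcc_of_le hab] at this
      exact continuousOn_const.add (continuousOn_const.mul this)
    · simp [Icc_eq_empty_of_lt hab]
  have hF' : ∀ x ∈ Ico a b, HasDerivWithinAt F (K * ψ x) (Ici x) x := by
    intro x hx
    have hmem : Icc a b ∈ 𝓝[>] x := mem_of_superset (Ioo_mem_nhdsGT hx.2)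
      (Ioo_subset_Icc_self.trans (Icc_subset_Icc_left hx.1))
    have hint : IntervalIntegrable ψ volume a x :=
      (hψ.mono (Icc_subset_Icc_right hx.2.le)).intervalIntegrable_of_Icc hx.1
    refine ((integral_hasDerivWithinAt_right hint ?_ ?_).const_mul K).const_add A
    · exact (hψ.stronglyMeasurableAtFilter_nhdsWithin measurableSet_Icc x).filter_mono
        (nhdsWithin_le_of_mem hmem)
    · exact (hψ x (Ico_subset_Icc_self hx)).mono_of_mem_nhdsWithin hmem
  have hF'_le : ∀ x ∈ Ico a b, K * ψ x ≤ K * F x + 0 := fun x hx => by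
    simpa using mul_le_mul_of_nonneg_left (h x (Ico_subset_Icc_self hx)) hK
  intro t ht
  calc ψ t ≤ F t := h t ht
    _ ≤ gronwallBound A K 0 (t - a) :=
      le_gronwallBound_of_liminf_deriv_right_le hF
        (fun x hx _ hr => (hF' x hx).liminf_right_slope_le hr) (by simp [F]) hF'_le t ht
    _ = A * exp (K * (t - a)) := gronwallBound_ε0 _ _ _

theorem continuous_of_norm_sub_le_mul {E F : Type*} [SeminormedAddCommGroup E]
    [SeminormedAddCommGroup F] {f : E → F} {L : ℝ} (hf : ∀ a b, ‖f a - f b‖ ≤ L * ‖a - b‖) :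
    Continuous f :=
  (LipschitzWith.of_dist_le' fun a b => by simpa only [dist_eq_norm] using hf a b).continuous

theorem norm_smul_comp_smul_sub_le {𝕜 E F : Type*} [NormedField 𝕜] [SeminormedAddCommGroup E]
    [NormedSpace 𝕜 E] [SeminormedAddCommGroup F] [NormedSpace 𝕜 F] {f : E → F} {L : ℝ}
    (hf : ∀ a b, ‖f a - f b‖ ≤ L * ‖a - b‖) (c : 𝕜) (a b : E) :
    ‖c⁻¹ • f (c • a) - c⁻¹ • f (c • b)‖ ≤ L * ‖a - b‖ := by
  rcases eq_or_ne c 0 with rfl | hc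
  · -- the left side is `0` because `0⁻¹ = 0`
    simpa using (norm_nonneg _).trans (hf a b)
  calc ‖c⁻¹ • f (c • a) - c⁻¹ • f (c • b)‖ = ‖c‖⁻¹ * ‖f (c • a) - f (c • b)‖ := by
        rw [← smul_sub, norm_smul, norm_inv]
    _ ≤ ‖c‖⁻¹ * (L * ‖c • a - c • b‖) := by gcongr; exact hf _ _
    _ = L * ‖a - b‖ := by
        rw [← smul_sub, norm_smul]
        field_simp [norm_ne_zero_iff.2 hc]

theorem ContinuousLinearMap.norm_map_comp_sub_le {X E F : Type*} [SeminormedAddCommGroup X]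
    [SeminormedAddCommGroup E] [NormedSpace ℝ E] [SeminormedAddCommGroup F] [NormedSpace ℝ F]
    {A : E →L[ℝ] F} {f : X → E} {C L : ℝ} (hA : ‖A‖ ≤ C)
    (hf : ∀ a b, ‖f a - f b‖ ≤ L * ‖a - b‖) (a b : X) :
    ‖A (f a) - A (f b)‖ ≤ C * L * ‖a - b‖ := by
  rw [← map_sub, mul_assoc]
  exact (A.le_of_opNorm_le_of_le hA (hf a b)).trans (by gcongr)

section Measurability

variable {α E F : Type*} [MeasurableSpace α] {μ : Measure α}
  [NormedAddCommGroup E] [NormedSpace ℝ E] [FiniteDimensional ℝ E]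
  [MeasurableSpace E] [BorelSpace E]
  [NormedAddCommGroup F] [NormedSpace ℝ F] [MeasurableSpace F] [BorelSpace F]
  [SecondCountableTopology F]

theorem AEMeasurable.clm_apply_of_forall_measurable {lam : α → E →L[ℝ] F}
    (hlam : ∀ v, Measurable fun s => lam s v) {v : α → E} (hv : AEMeasurable v μ) :
    AEMeasurable (fun s => lam s (v s)) μ := by
  let b := Module.finBasis ℝ E
  have hsum : (fun s => lam s (v s)) = fun s => ∑ i, b.equivFun (v s) i • lam s (b i) := by
    ext s
    conv_lhs => rw [← b.sum_equivFun (v s)]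
    simp only [map_sum, map_smul]
  have hcoord : AEMeasurable (fun s => b.equivFunL (v s)) μ :=
    b.equivFunL.continuous.measurable.comp_aemeasurable hv
  rw [hsum]
  exact Finset.aemeasurable_fun_sum _ fun i _ =>
    ((measurable_pi_apply i).comp_aemeasurable hcoord).smul (hlam (b i)).aemeasurable

theorem intervalIntegrable_clm_apply_of_continuousOn {lam : ℝ → E →L[ℝ] F} {v : ℝ → E}
    {a b C : ℝ} (hlam : ∀ v, Measurable fun s => lam s v)
    (hbd : ∀ s ∈ Icc a b, ‖lam s‖ ≤ C) (hv : ContinuousOn v (Icc a b)) :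
    ∀ t ∈ Icc a b, IntervalIntegrable (fun s => lam s (v s)) volume a t := by
  obtain ⟨M, hM⟩ := isCompact_Icc.bddAbove_image hv.norm
  have hint : IntegrableOn (fun s => lam s (v s)) (Icc a b) := by
    refine Integrable.mono' (integrable_const (C * M))
      ((AEMeasurable.clm_apply_of_forall_measurable hlam
        (hv.aemeasurable measurableSet_Icc)).aestronglyMeasurable) ?_
    refine (ae_restrict_iff' measurableSet_Icc).2 (Eventually.of_forall fun s hs => ?_)
    exact (lam s).le_of_opNorm_le_of_le (hbd s hs) (hM (mem_image_of_mem _ hs))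
  intro t ht
  exact (hint.mono_set (uIcc_subset_Icc (left_mem_Icc.2 (ht.1.trans ht.2)) ht)).intervalIntegrable

end Measurability

section IntegralEquation

variable {E : Type*} [NormedAddCommGroup E] [NormedSpace ℝ E]

theorem norm_le_mul_exp_of_integral_eq {F : ℝ → E → E} {φ : ℝ → E} {x : E} {a b K : ℝ}
    (hK : 0 ≤ K) (hF : ∀ s ∈ Icc a b, ∀ u, ‖F s u‖ ≤ K * ‖u‖) (hφc : ContinuousOn φ (Icc a b))
    (hφ : ∀ t ∈ Icc a b, φ t = x + ∫ s in a..t, F s (φ s)) :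
    ∀ t ∈ Icc a b, ‖φ t‖ ≤ ‖x‖ * exp (K * (t - a)) := by
  refine le_mul_exp_of_le_add_mul_integral hK hφc.norm fun t ht => ?_
  have hsub : Ioc a t ⊆ Icc a b := Ioc_subset_Icc_self.trans (Icc_subset_Icc_right ht.2)
  have hint : IntervalIntegrable (fun s => K * ‖φ s‖) volume a t :=
    ((hφc.norm.mono (Icc_subset_Icc_right ht.2)).intervalIntegrable_of_Icc ht.1).const_mul K
  rw [hφ t ht, ← intervalIntegral.integral_const_mul]
  refine (norm_add_le _ _).trans ?_
  gcongr
  exact norm_integral_le_of_norm_le ht.1 (Eventually.of_forall fun s hs => hF s (hsub hs) _) hint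

theorem norm_sub_le_mul_exp_of_integral_eq {F G : ℝ → E → E} {φ ψ : ℝ → E} {x y : E}
    {a b K A : ℝ} (hK : 0 ≤ K) (hF : ∀ s ∈ Icc a b, ∀ u v, ‖F s u - F s v‖ ≤ K * ‖u - v‖)
    (hφc : ContinuousOn φ (Icc a b)) (hψc : ContinuousOn ψ (Icc a b))
    (hFφ : ∀ t ∈ Icc a b, IntervalIntegrable (fun s => F s (φ s)) volume a t)
    (hFψ : ∀ t ∈ Icc a b, IntervalIntegrable (fun s => F s (ψ s)) volume a t)
    (hGψ : ∀ t ∈ Icc a b, IntervalIntegrable (fun s => G s (ψ s)) volume a t)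
    (hφ : ∀ t ∈ Icc a b, φ t = x + ∫ s in a..t, F s (φ s))
    (hψ : ∀ t ∈ Icc a b, ψ t = y + ∫ s in a..t, G s (ψ s))
    (hclose : ∀ t ∈ Icc a b, ‖∫ s in a..t, (F s (ψ s) - G s (ψ s))‖ ≤ A) :
    ∀ t ∈ Icc a b, ‖φ t - ψ t‖ ≤ (‖x - y‖ + A) * exp (K * (t - a)) := by
  refine le_mul_exp_of_le_add_mul_integral hK (hφc.sub hψc).norm fun t ht => ?_
  have hsub : Ioc a t ⊆ Icc a b := Ioc_subset_Icc_self.trans (Icc_subset_Icc_right ht.2)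
  have hdecomp : φ t - ψ t = (x - y) + (∫ s in a..t, (F s (φ s) - F s (ψ s)))
      + ∫ s in a..t, (F s (ψ s) - G s (ψ s)) := by
    rw [hφ t ht, hψ t ht, integral_sub (hFφ t ht) (hFψ t ht),
      integral_sub (hFψ t ht) (hGψ t ht)]
    abel
  have hlip : ‖∫ s in a..t, (F s (φ s) - F s (ψ s))‖ ≤ K * ∫ s in a..t, ‖φ s - ψ s‖ := by
    rw [← intervalIntegral.integral_const_mul]
    refine norm_integral_le_of_norm_le ht.1
      (Eventually.of_forall fun s hs => hF s (hsub hs) _ _) ?_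
    exact (((hφc.sub hψc).norm.mono (Icc_subset_Icc_right ht.2)).intervalIntegrable_of_Icc
      ht.1).const_mul K
  rw [hdecomp]
  calc _ ≤ ‖x - y‖ + ‖∫ s in a..t, (F s (φ s) - F s (ψ s))‖
        + ‖∫ s in a..t, (F s (ψ s) - G s (ψ s))‖ := norm_add₃_le
    _ ≤ _ := by linarith [hclose t ht]

end IntegralEquation

theorem norm_integral_apply_sub_apply_le {E F : Type*} [NormedAddCommGroup E] [NormedSpace ℝ E]
    [NormedAddCommGroup F] [NormedSpace ℝ F] {lam lam' : ℝ → E →L[ℝ] F} {u w : ℝ → E}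
    {a t C δ : ℝ} (hat : a ≤ t)
    (hu : IntervalIntegrable (fun s => lam' s (u s)) volume a t)
    (hw' : IntervalIntegrable (fun s => lam' s (w s)) volume a t)
    (hw : IntervalIntegrable (fun s => lam s (w s)) volume a t)
    (hlam' : ∀ s ∈ Ioc a t, ‖lam' s‖ ≤ C) (hδ : ∀ s ∈ Ioc a t, ‖u s - w s‖ ≤ δ) :
    ‖∫ s in a..t, (lam' s (u s) - lam s (w s))‖ ≤
      C * δ * (t - a) + ‖∫ s in a..t, (lam' s - lam s) (w s)‖ := by
  have hsplit : ∫ s in a..t, (lam' s (u s) - lam s (w s)) =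
      (∫ s in a..t, lam' s (u s - w s)) + ∫ s in a..t, (lam' s - lam s) (w s) := by
    simp only [map_sub, sub_apply]
    rw [integral_sub hu hw, integral_sub hu hw', integral_sub hw' hw]
    abel
  have hbound : ‖∫ s in a..t, lam' s (u s - w s)‖ ≤ C * δ * (t - a) := by
    rw [← abs_of_nonneg (sub_nonneg.2 hat)]
    refine norm_integral_le_of_norm_le_const fun s hs => ?_
    rw [uIoc_of_le hat] at hs
    exact (lam' s).le_of_opNorm_le_of_le (hlam' s hs) (hδ s hs)
  rw [hsplit]
  exact (norm_add_le _ _).trans (by gcongr)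

theorem norm_sub_le_mul_exp_of_integral_eq_clm_apply {E : Type*} [NormedAddCommGroup E]
    [NormedSpace ℝ E] [FiniteDimensional ℝ E] [MeasurableSpace E] [BorelSpace E]
    {lam lam' : ℝ → E →L[ℝ] E} {f g : E → E} {φ ψ : ℝ → E} {x : E} {a b C L δ ε : ℝ}
    (hC : 0 ≤ C) (hL : 0 ≤ L)
    (hlam : ∀ v, Measurable fun s => lam s v) (hlam' : ∀ v, Measurable fun s => lam' s v)
    (hlam_le : ∀ s ∈ Icc a b, ‖lam s‖ ≤ C) (hlam'_le : ∀ s ∈ Icc a b, ‖lam' s‖ ≤ C)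
    (hf : ∀ u v, ‖f u - f v‖ ≤ L * ‖u - v‖) (hg : Continuous g)
    (hφc : ContinuousOn φ (Icc a b)) (hψc : ContinuousOn ψ (Icc a b))
    (hφ : ∀ t ∈ Icc a b, φ t = x + ∫ s in a..t, lam' s (f (φ s)))
    (hψ : ∀ t ∈ Icc a b, ψ t = x + ∫ s in a..t, lam s (g (ψ s)))
    (hfg : ∀ s ∈ Icc a b, ‖f (ψ s) - g (ψ s)‖ ≤ ε)
    (hclose : ∀ t ∈ Icc a b, ‖∫ s in a..t, (lam' s - lam s) (g (ψ s))‖ ≤ δ) :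
    ∀ t ∈ Icc a b, ‖φ t - ψ t‖ ≤ (δ + C * ε * (b - a)) * exp (C * L * (t - a)) := by
  have hint : ∀ {Λ : ℝ → E →L[ℝ] E} {k : E → E} {χ : ℝ → E}, (∀ v, Measurable fun s => Λ s v) →
      (∀ s ∈ Icc a b, ‖Λ s‖ ≤ C) → Continuous k → ContinuousOn χ (Icc a b) →
      ∀ t ∈ Icc a b, IntervalIntegrable (fun s => Λ s (k (χ s))) volume a t :=
    fun hΛ hΛ_le hk hχ => intervalIntegrable_clm_apply_of_continuousOn hΛ hΛ_le
      (hk.comp_continuousOn hχ)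
  have hfC := continuous_of_norm_sub_le_mul hf
  have hnear : ∀ t ∈ Icc a b,
      ‖∫ s in a..t, (lam' s (f (ψ s)) - lam s (g (ψ s)))‖ ≤ δ + C * ε * (b - a) := by
    intro t ht
    have hsub : Ioc a t ⊆ Icc a b := Ioc_subset_Icc_self.trans (Icc_subset_Icc_right ht.2)
    have hε : 0 ≤ ε := (norm_nonneg _).trans (hfg t ht)
    have hlen : C * ε * (t - a) ≤ C * ε * (b - a) := by gcongr; exact ht.2
    linarith [hclose t ht, norm_integral_apply_sub_apply_le ht.1
      (hint hlam' hlam'_le hfC hψc t ht) (hint hlam' hlam'_le hg hψc t ht)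
      (hint hlam hlam_le hg hψc t ht) (fun s hs => hlam'_le s (hsub hs))
      (fun s hs => hfg s (hsub hs))]
  simpa using norm_sub_le_mul_exp_of_integral_eq (G := fun s y => lam s (g y)) (mul_nonneg hC hL)
    (fun s hs => (lam' s).norm_map_comp_sub_le (hlam'_le s hs) hf) hφc hψc
    (hint hlam' hlam'_le hfC hφc) (hint hlam' hlam'_le hfC hψc) (hint hlam hlam_le hg hψc)
    hφ hψ hnear

theorem ode_perturbation_estimate_general
    {d : ℕ} (T L Cbar c εbar : ℝ)
    (hL : 0 ≤ L) (hCbar : 0 < Cbar) (hεbar : 0 < εbar)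
    (h hinf : (Fin d → ℝ) → (Fin d → ℝ))
    (hhLip : ∀ a b : Fin d → ℝ, ‖h a - h b‖ ≤ L * ‖a - b‖)
    (hinfLip : ∀ a b : Fin d → ℝ, ‖hinf a - hinf b‖ ≤ L * ‖a - b‖)
    (hinf0 : hinf 0 = 0)
    (lamstar lam' : ℝ → (Fin d → ℝ) →L[ℝ] (Fin d → ℝ))
    (hstarmeas : ∀ v : Fin d → ℝ, Measurable fun s => lamstar s v)
    (h'meas : ∀ v : Fin d → ℝ, Measurable fun s => lam' s v)
    (hstarbd : ∀ s ∈ Set.Icc (0 : ℝ) T, ‖lamstar s‖ ≤ Cbar)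
    (h'bd : ∀ s ∈ Set.Icc (0 : ℝ) T, ‖lam' s‖ ≤ Cbar)
    (x₀ : Fin d → ℝ) (hx₀ : ‖x₀‖ = 1)
    (φinf φ : ℝ → Fin d → ℝ)
    (hφinfc : ContinuousOn φinf (Set.Icc 0 T)) (hφc : ContinuousOn φ (Set.Icc 0 T))
    (hφinf : ∀ t ∈ Set.Icc (0 : ℝ) T,
      φinf t = x₀ + ∫ s in (0 : ℝ)..t, lamstar s (hinf (φinf s)))
    (hφ : ∀ t ∈ Set.Icc (0 : ℝ) T,
      φ t = x₀ + ∫ s in (0 : ℝ)..t, lam' s (c⁻¹ • h (c • φ s)))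
    (hclose : ∀ t ∈ Set.Icc (0 : ℝ) T,
      ‖∫ s in (0 : ℝ)..t, (lam' s - lamstar s) (hinf (φinf s))‖ ≤ εbar) :
    ∀ t ∈ Set.Icc (0 : ℝ) T,
      ‖φ t - φinf t‖ ≤
        (εbar + (Cbar * sSup ((fun y : Fin d → ℝ =>
            ‖c⁻¹ • h (c • y) - hinf y‖) '' Metric.closedBall 0 (Real.exp (Cbar * L * T)))) * T)
          * Real.exp (Cbar * L * T) := by
  set g : (Fin d → ℝ) → Fin d → ℝ := fun y => c⁻¹ • h (c • y)
  set εc := sSup ((fun y => ‖g y - hinf y‖) '' Metric.closedBall 0 (exp (Cbar * L * T)))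
  have hK : 0 ≤ Cbar * L := mul_nonneg hCbar.le hL
  have hgC : Continuous g := continuous_of_norm_sub_le_mul (norm_smul_comp_smul_sub_le hhLip c)
  have hinfC : Continuous hinf := continuous_of_norm_sub_le_mul hinfLip
  have hφinf_le : ∀ s ∈ Icc 0 T, ‖φinf s‖ ≤ exp (Cbar * L * T) := fun s hs => by
    have := norm_le_mul_exp_of_integral_eq (F := fun s y => lamstar s (hinf y)) hK
      (fun s hs y => by
        simpa [hinf0] using (lamstar s).norm_map_comp_sub_le (hstarbd s hs) hinfLip y 0)
      hφinfc hφinf s hs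
    rw [hx₀, one_mul, sub_zero] at this
    exact this.trans (exp_le_exp.2 (by gcongr; exact hs.2))
  have hεc : ∀ y, ‖y‖ ≤ exp (Cbar * L * T) → ‖g y - hinf y‖ ≤ εc := fun y hy =>
    le_csSup ((isCompact_closedBall _ _).image (hgC.sub hinfC).norm).bddAbove
      ⟨y, mem_closedBall_zero_iff.2 hy, rfl⟩
  have hεc0 : 0 ≤ εc := (norm_nonneg _).trans (hεc 0 (by simp [(exp_pos _).le]))
  intro t ht
  have := norm_sub_le_mul_exp_of_integral_eq_clm_apply hCbar.le hL hstarmeas h'meas hstarbd h'bd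
    (norm_smul_comp_smul_sub_le hhLip c) hinfC hφc hφinfc hφ hφinf
    (fun s hs => hεc _ (hφinf_le s hs)) hclose t ht
  rw [sub_zero, sub_zero] at this
  have hA : 0 ≤ εbar + Cbar * εc * T :=
    add_nonneg hεbar.le (mul_nonneg (mul_nonneg hCbar.le hεc0) (ht.1.trans ht.2))
  exact this.trans (by gcongr; exact ht.2)

/-- **Lemma 6 (core estimate).** With `h, h_∞` Lipschitz of modulus `L`, `h_∞(0) = 0`,
`h_c(y) = h(cy)/c`, `B = e^{C̄LT}`, `ε(c) = C̄·sup_{‖y‖≤B} ‖h_c(y) − h_∞(y)‖`: if `φ_∞`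
solves `ẋ = λ*(t) h_∞(x)` and `φ` solves `ẋ = λ'(t) h_c(x)` from the same unit-norm initial
condition, with `‖λ*(s)‖, ‖λ'(s)‖ ≤ C̄` and
`‖∫_0^t (λ'(s) − λ*(s)) h_∞(φ_∞(s)) ds‖ ≤ ε̄` on `[0,T]`, then
`‖φ(t) − φ_∞(t)‖ ≤ (ε̄ + ε(c) T) e^{C̄LT}` on `[0,T]`. -/
theorem ode_perturbation_estimate
    {d : ℕ} (hd : 1 ≤ d) (T L Cbar c εbar : ℝ)
    (hT : 0 < T) (hL : 0 ≤ L) (hCbar : 0 < Cbar) (hc : 1 ≤ c) (hεbar : 0 < εbar)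
    (h hinf : (Fin d → ℝ) → (Fin d → ℝ))
    (hhLip : ∀ a b : Fin d → ℝ, ‖h a - h b‖ ≤ L * ‖a - b‖)
    (hinfLip : ∀ a b : Fin d → ℝ, ‖hinf a - hinf b‖ ≤ L * ‖a - b‖)
    (hinf0 : hinf 0 = 0)
    (lamstar lam' : ℝ → (Fin d → ℝ) →L[ℝ] (Fin d → ℝ))
    (hstarmeas : ∀ v : Fin d → ℝ, Measurable fun s => lamstar s v)
    (h'meas : ∀ v : Fin d → ℝ, Measurable fun s => lam' s v)
    (hstarbd : ∀ s ∈ Set.Icc (0 : ℝ) T, ‖lamstar s‖ ≤ Cbar)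
    (h'bd : ∀ s ∈ Set.Icc (0 : ℝ) T, ‖lam' s‖ ≤ Cbar)
    (x₀ : Fin d → ℝ) (hx₀ : ‖x₀‖ = 1)
    (φinf φ : ℝ → Fin d → ℝ)
    (hφinfc : ContinuousOn φinf (Set.Icc 0 T)) (hφc : ContinuousOn φ (Set.Icc 0 T))
    (hφinf0 : φinf 0 = x₀) (hφ0 : φ 0 = x₀)
    (hφinf : ∀ t ∈ Set.Icc (0 : ℝ) T,
      φinf t = x₀ + ∫ s in (0 : ℝ)..t, lamstar s (hinf (φinf s)))
    (hφ : ∀ t ∈ Set.Icc (0 : ℝ) T,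
      φ t = x₀ + ∫ s in (0 : ℝ)..t, lam' s (c⁻¹ • h (c • φ s)))
    (hclose : ∀ t ∈ Set.Icc (0 : ℝ) T,
      ‖∫ s in (0 : ℝ)..t, (lam' s - lamstar s) (hinf (φinf s))‖ ≤ εbar) :
    ∀ t ∈ Set.Icc (0 : ℝ) T,
      ‖φ t - φinf t‖ ≤
        (εbar + (Cbar * sSup ((fun y : Fin d → ℝ =>
            ‖c⁻¹ • h (c • y) - hinf y‖) '' Metric.closedBall 0 (Real.exp (Cbar * L * T)))) * T)
          * Real.exp (Cbar * L * T) :=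
  ode_perturbation_estimate_general T L Cbar c εbar hL hCbar hεbar h hinf hhLip hinfLip hinf0
    lamstar lam' hstarmeas h'meas hstarbd h'bd x₀ hx₀ φinf φ hφinfc hφc hφinf hφ hclose
end
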